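/- arXiv:0710.1845 — 6 statements merged into one kernel-verified Lean document; each statement's English description precedes it below -/
import Mathlib

section
/- If f: [-1,1] → [-1,1] is a piecewise expanding unimodal map (C^1 on [-1,0] and [0,1], with inf Df > 1 on [-1,0] and sup Df < -1 on [0,1], f(-1)=f(1)=-1), then there exists ε > 0 such that for every nondegenerate subinterval L of [-1,1], there exists i ≥ 1 with |f^i(L)| > ε. -/
/-!
Write `J n = f^[n] '' [a, b]`. If `J n` does not contain the turning point `0` in its interior,
`f` is monotone on it and `|J (n+1)| ≥ λ |J n|`; if it does, `f 0` is an endpoint of `J (n+1)` and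
`|J (n+1)| ≥ λ |J n| / 2`. Until the next time `u` at which `J u` contains `0` in its interior, the
orbit of `f 0` runs along the endpoints, so `f^[u-s-1] (f 0)` is a nonzero endpoint of `J u` and
`|f^[u-s-1] (f 0)| ≤ |J u|`. Take `λ ^ N > 4` and `ε` below every nonzero `|f^[k] (f 0)|`, `k < N`.
If every `|J n|`, `n ≥ 1`, were at most `ε`, two such times would be at least `N` apart, so each
window of `N` steps would at least double `|J n|`, which is impossible inside `[-1, 1]`.
-/

open Set Filter Topology

def IsExpansive (f : ℝ → ℝ) (ε : ℝ) : Prop :=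
  ∀ a b : ℝ, -1 ≤ a → a < b → b ≤ 1 →
    ∃ i : ℕ, 1 ≤ i ∧ ∃ x ∈ Icc a b, ∃ y ∈ Icc a b, ε < |f^[i] x - f^[i] y|

structure UnimodalExpanding (f : ℝ → ℝ) (lam : ℝ) : Prop where
  mapsTo : MapsTo f (Icc (-1) 1) (Icc (-1) 1)
  continuousOn : ContinuousOn f (Icc (-1) 1)
  expand_left : ∀ x y, -1 ≤ x → x ≤ y → y ≤ 0 → lam * (y - x) ≤ f y - f x
  expand_right : ∀ x y, 0 ≤ x → x ≤ y → y ≤ 1 → lam * (y - x) ≤ f x - f y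

theorem mul_sub_le_sub_of_hasDerivWithinAt {f f' : ℝ → ℝ} {c d lam : ℝ}
    (hf : ContinuousOn f (Icc c d))
    (hf' : ∀ x ∈ Ioo c d, HasDerivWithinAt f (f' x) (Icc c d) x ∧ lam ≤ f' x)
    {x y : ℝ} (hcx : c ≤ x) (hxy : x ≤ y) (hyd : y ≤ d) : lam * (y - x) ≤ f y - f x := by
  have hmono : MonotoneOn (fun z => f z - lam * z) (Icc c d) := by
    refine monotoneOn_of_hasDerivWithinAt_nonneg (f' := fun z => f' z - lam * 1) (convex_Icc c d)
      (hf.sub (continuousOn_const.mul continuousOn_id)) (fun z hz => ?_) (fun z hz => ?_)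
    all_goals rw [interior_Icc] at hz
    · rw [interior_Icc]
      exact ((hf' z hz).1.mono Ioo_subset_Icc_self).sub ((hasDerivWithinAt_id z _).const_mul lam)
    · linarith [(hf' z hz).2]
  linarith [hmono ⟨hcx, hxy.trans hyd⟩ ⟨hcx.trans hxy, hyd⟩ hxy]

theorem UnimodalExpanding.of_hasDerivWithinAt {f Df : ℝ → ℝ} {lam : ℝ}
    (hmap : MapsTo f (Icc (-1 : ℝ) 1) (Icc (-1 : ℝ) 1))
    (hcont : ContinuousOn f (Icc (-1 : ℝ) 1))
    (hL : ∀ x ∈ Ico (-1 : ℝ) 0, HasDerivWithinAt f (Df x) (Icc (-1 : ℝ) 0) x ∧ lam ≤ Df x)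
    (hR : ∀ x ∈ Ioc (0 : ℝ) 1, HasDerivWithinAt f (Df x) (Icc (0 : ℝ) 1) x ∧ Df x ≤ -lam) :
    UnimodalExpanding f lam where
  mapsTo := hmap
  continuousOn := hcont
  expand_left _ _ hx hxy hy :=
    mul_sub_le_sub_of_hasDerivWithinAt (hcont.mono (Icc_subset_Icc le_rfl zero_le_one))
      (fun z hz => hL z (Ioo_subset_Ico_self hz)) hx hxy hy
  expand_right x y hx hxy hy := by
    have hR' : ∀ z ∈ Ioo (0 : ℝ) 1,
        HasDerivWithinAt (fun x => -f x) (-Df z) (Icc 0 1) z ∧ lam ≤ -Df z := fun z hz =>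
      have h := hR z (Ioo_subset_Ioc_self hz)
      ⟨h.1.neg, by linarith [h.2]⟩
    have h : lam * (y - x) ≤ -f y - -f x := mul_sub_le_sub_of_hasDerivWithinAt
      (hcont.mono (Icc_subset_Icc (by norm_num) le_rfl)).neg hR' hx hxy hy
    linarith

/-- For `f` increasing on `[-1, 0]` and decreasing on `[0, 1]`, and `x ≤ y` in `[-1, 1]`, the
endpoints of the interval `f '' Icc x y`. -/
noncomputable def lapEndpoints (f : ℝ → ℝ) (I : ℝ × ℝ) : ℝ × ℝ :=
  if I.2 ≤ 0 then (f I.1, f I.2) else if 0 ≤ I.1 then (f I.2, f I.1) else (min (f I.1) (f I.2), f 0)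

def StraddlesZero (I : ℝ × ℝ) : Prop := I.1 < 0 ∧ 0 < I.2

section lapEndpoints

variable {f : ℝ → ℝ} {I : ℝ × ℝ}

theorem lapEndpoints_mem_image (h : I.1 ≤ I.2) :
    (lapEndpoints f I).1 ∈ f '' Icc I.1 I.2 ∧ (lapEndpoints f I).2 ∈ f '' Icc I.1 I.2 := by
  have hx : f I.1 ∈ f '' Icc I.1 I.2 := mem_image_of_mem f (left_mem_Icc.2 h)
  have hy : f I.2 ∈ f '' Icc I.1 I.2 := mem_image_of_mem f (right_mem_Icc.2 h)
  unfold lapEndpoints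
  split_ifs with h2 h1
  · exact ⟨hx, hy⟩
  · exact ⟨hy, hx⟩
  · refine ⟨?_, mem_image_of_mem f ⟨by linarith, by linarith⟩⟩
    rcases min_choice (f I.1) (f I.2) with e | e <;> rw [e] <;> assumption

theorem lapEndpoints_snd_of_straddlesZero (h : StraddlesZero I) : (lapEndpoints f I).2 = f 0 := by
  simp [lapEndpoints, h.1.not_ge, h.2.not_ge]

theorem map_endpoint_eq_lapEndpoints (h : ¬ StraddlesZero I) {q : ℝ} (hq : q = I.1 ∨ q = I.2) :
    f q = (lapEndpoints f I).1 ∨ f q = (lapEndpoints f I).2 := by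
  unfold lapEndpoints
  split_ifs with h2 h1
  · rcases hq with rfl | rfl <;> simp
  · rcases hq with rfl | rfl <;> simp
  · exact absurd ⟨not_le.1 h1, not_le.1 h2⟩ h

theorem StraddlesZero.abs_endpoint_mem_Ioc (h : StraddlesZero I) {q : ℝ} (hq : q = I.1 ∨ q = I.2) :
    |q| ∈ Ioc 0 (I.2 - I.1) := by
  obtain ⟨h1, h2⟩ := h
  rcases hq with rfl | rfl
  · exact ⟨abs_pos.2 h1.ne, by rw [abs_of_neg h1]; linarith⟩
  · exact ⟨abs_pos.2 h2.ne', by rw [abs_of_pos h2]; linarith⟩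

theorem iterate_map_zero_eq_endpoint {O : ℕ → ℝ × ℝ} (hO : ∀ n, O (n + 1) = lapEndpoints f (O n))
    {s : ℕ} (hs : StraddlesZero (O s)) :
    ∀ i, (∀ t, s < t → t ≤ s + i → ¬ StraddlesZero (O t)) →
      f^[i] (f 0) = (O (s + i + 1)).1 ∨ f^[i] (f 0) = (O (s + i + 1)).2
  | 0, _ => Or.inr (by rw [hO, lapEndpoints_snd_of_straddlesZero hs]; rfl)
  | i + 1, hfree => by
    have ih := iterate_map_zero_eq_endpoint hO hs i fun t h1 h2 => hfree t h1 (by omega)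
    rw [Function.iterate_succ_apply', hO]
    exact map_endpoint_eq_lapEndpoints (hfree _ (by omega) le_rfl) ih

end lapEndpoints

namespace UnimodalExpanding

variable {f : ℝ → ℝ} {lam : ℝ} {I : ℝ × ℝ}

theorem mul_sub_le_lapEndpoints (hf : UnimodalExpanding f lam) (h1 : -1 ≤ I.1) (h12 : I.1 ≤ I.2)
    (h2 : I.2 ≤ 1) (h : ¬ StraddlesZero I) :
    lam * (I.2 - I.1) ≤ (lapEndpoints f I).2 - (lapEndpoints f I).1 := by
  unfold lapEndpoints
  split_ifs with hy hx
  · exact hf.expand_left _ _ h1 h12 hy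
  · exact hf.expand_right _ _ hx h12 h2
  · exact absurd ⟨not_le.1 hx, not_le.1 hy⟩ h

theorem half_mul_sub_le_lapEndpoints (hf : UnimodalExpanding f lam) (h1 : -1 ≤ I.1)
    (h2 : I.2 ≤ 1) (h : StraddlesZero I) :
    lam / 2 * (I.2 - I.1) ≤ (lapEndpoints f I).2 - (lapEndpoints f I).1 := by
  obtain ⟨hx, hy⟩ := h
  have hl := hf.expand_left I.1 0 h1 hx.le le_rfl
  have hr := hf.expand_right 0 I.2 le_rfl hy.le h2
  simp only [lapEndpoints, hx.not_ge, hy.not_ge, if_false]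
  linarith [min_le_left (f I.1) (f I.2), min_le_right (f I.1) (f I.2)]

theorem lapEndpoints_iterate_mem (hf : UnimodalExpanding f lam) (hlam : 0 ≤ lam) {a b : ℝ}
    (ha : -1 ≤ a) (hab : a ≤ b) (hb : b ≤ 1) (n : ℕ) :
    ((lapEndpoints f)^[n] (a, b)).1 ∈ f^[n] '' Icc a b ∧
      ((lapEndpoints f)^[n] (a, b)).2 ∈ f^[n] '' Icc a b ∧
      ((lapEndpoints f)^[n] (a, b)).1 ≤ ((lapEndpoints f)^[n] (a, b)).2 := by
  induction n with
  | zero => exact ⟨⟨a, left_mem_Icc.2 hab, rfl⟩, ⟨b, right_mem_Icc.2 hab, rfl⟩, hab⟩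
  | succ n ih =>
    set I := (lapEndpoints f)^[n] (a, b)
    obtain ⟨hx, hy, hxy⟩ := ih
    have hab' : Icc a b ⊆ Icc (-1) 1 := Icc_subset_Icc ha hb
    have hJ : f^[n] '' Icc a b ⊆ Icc (-1) 1 := ((hf.mapsTo.iterate n).mono_left hab').image_subset
    have hIJ : Icc I.1 I.2 ⊆ f^[n] '' Icc a b :=
      (isPreconnected_Icc.image _ ((hf.continuousOn.iterate hf.mapsTo n).mono hab')).Icc_subset
        hx hy
    have himage : f '' Icc I.1 I.2 ⊆ f^[n + 1] '' Icc a b := by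
      rw [Function.iterate_succ', image_comp]
      exact image_mono hIJ
    rw [Function.iterate_succ_apply']
    obtain ⟨hx', hy'⟩ := lapEndpoints_mem_image (f := f) hxy
    refine ⟨himage hx', himage hy', ?_⟩
    have h1 : -1 ≤ I.1 := (hJ hx).1
    have h2 : I.2 ≤ 1 := (hJ hy).2
    by_cases hs : StraddlesZero I
    · nlinarith [hf.half_mul_sub_le_lapEndpoints h1 h2 hs]
    · nlinarith [hf.mul_sub_le_lapEndpoints h1 hxy h2 hs]

end UnimodalExpanding

section growth

variable {ℓ : ℕ → ℝ} {S : ℕ → Prop} {lam : ℝ} {N : ℕ}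

theorem add_le_of_consecutive_add_le
    (h : ∀ s u, S s → S u → s < u → (∀ t, s < t → t < u → ¬ S t) → s + N ≤ u)
    {s u : ℕ} (hs : S s) (hu : S u) (hsu : s < u) : s + N ≤ u := by
  classical
  have hex : ∃ t, s < t ∧ S t := ⟨u, hsu, hu⟩
  have hnext := Nat.find_spec hex
  have := h s _ hs hnext.2 hnext.1 fun t hst ht hSt => Nat.find_min hex ht ⟨hst, hSt⟩
  linarith [Nat.find_min' hex ⟨hsu, hu⟩]

theorem pow_mul_le_of_forall_not (hlam : 0 ≤ lam) (hgrow : ∀ n, ¬ S n → lam * ℓ n ≤ ℓ (n + 1))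
    {n : ℕ} : ∀ k, (∀ t, n ≤ t → t < n + k → ¬ S t) → lam ^ k * ℓ n ≤ ℓ (n + k)
  | 0, _ => by simp
  | k + 1, hfree => calc
      lam ^ (k + 1) * ℓ n = lam * (lam ^ k * ℓ n) := by ring
      _ ≤ lam * ℓ (n + k) := by
        gcongr
        exact pow_mul_le_of_forall_not hlam hgrow k fun t h1 h2 => hfree t h1 (by omega)
      _ ≤ ℓ (n + (k + 1)) := hgrow _ (hfree _ (by omega) (by omega))

theorem pow_div_two_mul_le (hlam : 0 ≤ lam) (hℓ : ∀ n, 0 ≤ ℓ n)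
    (hgrow : ∀ n, ¬ S n → lam * ℓ n ≤ ℓ (n + 1)) (hsplit : ∀ n, S n → lam / 2 * ℓ n ≤ ℓ (n + 1))
    (hsep : ∀ s u, S s → S u → s < u → s + N ≤ u) (n : ℕ) : lam ^ N / 2 * ℓ n ≤ ℓ (n + N) := by
  by_cases hS : ∃ s, n ≤ s ∧ s < n + N ∧ S s
  · obtain ⟨s, hns, hsN, hs⟩ := hS
    have hfree : ∀ t, t ≠ s → n ≤ t → t < n + N → ¬ S t := fun t hts hnt htN ht => by
      rcases lt_or_gt_of_ne hts with h | h
      · linarith [hsep t s ht hs h]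
      · linarith [hsep s t hs ht h]
    obtain ⟨i, rfl⟩ := Nat.exists_eq_add_of_le hns
    obtain ⟨j, hj⟩ := Nat.exists_eq_add_of_lt hsN
    obtain rfl : N = i + j + 1 := by omega
    calc lam ^ (i + j + 1) / 2 * ℓ n = lam ^ j * (lam / 2 * (lam ^ i * ℓ n)) := by ring
      _ ≤ lam ^ j * (lam / 2 * ℓ (n + i)) := by
        gcongr
        exact pow_mul_le_of_forall_not hlam hgrow i fun t h1 h2 => hfree t (by omega) h1 (by omega)
      _ ≤ lam ^ j * ℓ (n + i + 1) := by gcongr; exact hsplit _ hs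
      _ ≤ ℓ (n + i + 1 + j) :=
        pow_mul_le_of_forall_not hlam hgrow j fun t h1 h2 =>
          hfree t (by omega) (by omega) (by omega)
      _ = ℓ (n + (i + j + 1)) := by ring_nf
  · push Not at hS
    calc lam ^ N / 2 * ℓ n ≤ lam ^ N * ℓ n := by nlinarith [hℓ n, pow_nonneg hlam N]
      _ ≤ ℓ (n + N) := pow_mul_le_of_forall_not hlam hgrow N fun t h1 h2 => hS t h1 h2

theorem exists_lt_of_two_mul_le (hℓ0 : 0 < ℓ 0) (h : ∀ n, 2 * ℓ n ≤ ℓ (n + N)) (C : ℝ) :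
    ∃ n, C < ℓ n := by
  have hpow : ∀ k : ℕ, 2 ^ k * ℓ 0 ≤ ℓ (k * N) := by
    intro k
    induction k with
    | zero => simp
    | succ k ih => calc
        2 ^ (k + 1) * ℓ 0 = 2 * (2 ^ k * ℓ 0) := by ring
        _ ≤ ℓ (k * N + N) := by linarith [h (k * N)]
        _ = ℓ ((k + 1) * N) := by rw [add_mul, one_mul]
  obtain ⟨k, hk⟩ := pow_unbounded_of_one_lt (C / ℓ 0) one_lt_two
  exact ⟨k * N, ((div_lt_iff₀ hℓ0).1 hk).trans_le (hpow k)⟩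

end growth

theorem exists_pos_lt_abs (x : ℕ → ℝ) (N : ℕ) : ∃ ε > 0, ∀ k < N, x k ≠ 0 → ε < |x k| := by
  have h : ∀ᶠ ε in 𝓝 (0 : ℝ), ∀ k ∈ Iio N, x k ≠ 0 → ε < |x k| :=
    (eventually_all_finite (finite_Iio N)).2 fun k _ => by
      by_cases hk : x k = 0
      · simp [hk]
      · filter_upwards [eventually_lt_nhds (abs_pos.2 hk)] with ε hε _ using hε
  obtain ⟨ε, hε, hpos⟩ := ((h.filter_mono nhdsWithin_le_nhds).and
    (self_mem_nhdsWithin (s := Ioi (0 : ℝ)))).exists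
  exact ⟨ε, hpos, hε⟩

theorem UnimodalExpanding.exists_isExpansive {f : ℝ → ℝ} {lam : ℝ} (hf : UnimodalExpanding f lam)
    (hlam : 1 < lam) : ∃ ε > 0, IsExpansive f ε := by
  obtain ⟨N, hN⟩ := pow_unbounded_of_one_lt 4 hlam
  obtain ⟨ε, hε, hεN⟩ := exists_pos_lt_abs (fun k => f^[k] (f 0)) N
  refine ⟨ε, hε, fun a b ha hab hb => ?_⟩
  by_contra! hsmall
  set O : ℕ → ℝ × ℝ := fun n => (lapEndpoints f)^[n] (a, b)
  have hO : ∀ n, O (n + 1) = lapEndpoints f (O n) := fun n => Function.iterate_succ_apply' _ _ _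
  have hmem := hf.lapEndpoints_iterate_mem (by linarith) ha hab.le hb
  have hbound : ∀ n, -1 ≤ (O n).1 ∧ (O n).2 ≤ 1 := fun n =>
    have hJ := ((hf.mapsTo.iterate n).mono_left (Icc_subset_Icc ha hb)).image_subset
    ⟨(hJ (hmem n).1).1, (hJ (hmem n).2.1).2⟩
  have hshort : ∀ n, 1 ≤ n → (O n).2 - (O n).1 ≤ ε := fun n hn => by
    obtain ⟨⟨x, hx, hxe⟩, ⟨y, hy, hye⟩, -⟩ := hmem n
    rw [← hxe, ← hye]
    exact (le_abs_self _).trans (hsmall n hn y hy x hx)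
  have hsep : ∀ s u, StraddlesZero (O s) → StraddlesZero (O u) → s < u → s + N ≤ u :=
    fun _ _ => add_le_of_consecutive_add_le (N := N) fun s u hs hu hsu hfree => by
      by_contra! huN
      -- `f^[i] (f 0)` with `i < N` would be a nonzero endpoint of the short interval `O u`
      obtain ⟨i, rfl⟩ := Nat.exists_eq_add_of_lt hsu
      have hq := iterate_map_zero_eq_endpoint hO hs i fun t h1 h2 => hfree t h1 (by omega)
      obtain ⟨hpos, hle⟩ := hu.abs_endpoint_mem_Ioc hq
      linarith [hεN i (by omega) (abs_pos.1 hpos), hshort (s + i + 1) (by omega)]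
  have hwin := pow_div_two_mul_le (ℓ := fun n => (O n).2 - (O n).1) (by linarith)
    (fun n => sub_nonneg.2 (hmem n).2.2)
    (fun n hn => hO n ▸ hf.mul_sub_le_lapEndpoints (hbound n).1 (hmem n).2.2 (hbound n).2 hn)
    (fun n hn => hO n ▸ hf.half_mul_sub_le_lapEndpoints (hbound n).1 (hbound n).2 hn) hsep
  obtain ⟨n, hn⟩ := exists_lt_of_two_mul_le (ℓ := fun n => (O n).2 - (O n).1)
    (by simpa [O] using hab) (fun n => by nlinarith [hwin n, (hmem n).2.2]) 2
  linarith [hbound n]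

theorem expansive_of_piecewise_expanding_general
    (f Df : ℝ → ℝ)
    (hmap : Set.MapsTo f (Set.Icc (-1 : ℝ) 1) (Set.Icc (-1 : ℝ) 1))
    (hcont : ContinuousOn f (Set.Icc (-1 : ℝ) 1))
    (lam : ℝ) (hlam : 1 < lam)
    (hL : ∀ x ∈ Set.Ico (-1 : ℝ) 0,
      HasDerivWithinAt f (Df x) (Set.Icc (-1 : ℝ) 0) x ∧ lam ≤ Df x)
    (hR : ∀ x ∈ Set.Ioc (0 : ℝ) 1,
      HasDerivWithinAt f (Df x) (Set.Icc (0 : ℝ) 1) x ∧ Df x ≤ -lam) :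
    ∃ ε > (0 : ℝ), ∀ a b : ℝ, -1 ≤ a → a < b → b ≤ 1 →
      ∃ i : ℕ, 1 ≤ i ∧ ∃ x ∈ Set.Icc a b, ∃ y ∈ Set.Icc a b,
        ε < |f^[i] x - f^[i] y| :=
  (UnimodalExpanding.of_hasDerivWithinAt hmap hcont hL hR).exists_isExpansive hlam

/-- Every piecewise expanding unimodal map is ε-expansive for some ε > 0:
there is ε > 0 so that every nondegenerate subinterval of I = [-1,1] has an iterate of
length (diameter, witnessed by two points) greater than ε. -/
theorem expansive_of_piecewise_expanding
    (f Df : ℝ → ℝ)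
    (hmap : Set.MapsTo f (Set.Icc (-1 : ℝ) 1) (Set.Icc (-1 : ℝ) 1))
    (hcont : ContinuousOn f (Set.Icc (-1 : ℝ) 1))
    (hfm1 : f (-1) = -1) (hf1 : f 1 = -1) (hf0 : f 0 ≤ 1)
    (lam : ℝ) (hlam : 1 < lam)
    (hDfL : ContinuousOn Df (Set.Ico (-1 : ℝ) 0))
    (hDfR : ContinuousOn Df (Set.Ioc (0 : ℝ) 1))
    (hL : ∀ x ∈ Set.Ico (-1 : ℝ) 0,
      HasDerivWithinAt f (Df x) (Set.Icc (-1 : ℝ) 0) x ∧ lam ≤ Df x)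
    (hR : ∀ x ∈ Set.Ioc (0 : ℝ) 1,
      HasDerivWithinAt f (Df x) (Set.Icc (0 : ℝ) 1) x ∧ Df x ≤ -lam) :
    ∃ ε > (0 : ℝ), ∀ a b : ℝ, -1 ≤ a → a < b → b ≤ 1 →
      ∃ i : ℕ, 1 ≤ i ∧ ∃ x ∈ Set.Icc a b, ∃ y ∈ Set.Icc a b,
        ε < |f^[i] x - f^[i] y| :=
  expansive_of_piecewise_expanding_general f Df hmap hcont lam hlam hL hR
end

section
/- Let f be a piecewise expanding unimodal map with critical point c = 0, and let v ∈ L^∞(I). Let D be the set of x ∈ I whose forward orbit under f does not contain c. Then the function α: D → ℝ defined by α(x) = -Σ_{i=0}^∞ v(f^i(x))/Df^{i+1}(x) is well-defined, bounded (by |v|_∞/(λ_f - 1)), and satisfies the twisted cohomological equation v(x) = α(f(x)) - Df(x)·α(x) for every x ∈ D. -/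
/-!
Along an orbit on which `|Df| ≥ λ > 1`, the `i`-th term of the series is bounded by
`|v|_∞ λ^{-(i+1)}`, so the series converges absolutely and is dominated by the geometric sum
`|v|_∞ / (λ - 1)`. Splitting off the `i = 0` term and using the chain rule
`Df^{i+2}(x) = Df^{i+1}(f x) · Df(x)` gives `α(x) = -(v(x) - α(f x)) / Df(x)`, which is the
twisted cohomological equation once `Df(x) ≠ 0`.
-/

open Finset

namespace TwistedCohomology

variable {α 𝕜 : Type*} [NormedField 𝕜] (f : α → α) (Df v : α → 𝕜)

/-- `Df^n(x)`, the derivative of `f^n` at `x` by the chain rule. -/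
def derivIter (n : ℕ) (x : α) : 𝕜 := ∏ j ∈ range n, Df (f^[j] x)

def twistedTerm (x : α) (i : ℕ) : 𝕜 := v (f^[i] x) / derivIter f Df (i + 1) x

/-- The paper's `α`. -/
noncomputable def twistedSolution (x : α) : 𝕜 := -∑' i, twistedTerm f Df v x i

variable {f Df v}

theorem derivIter_succ' (n : ℕ) (x : α) :
    derivIter f Df (n + 1) x = derivIter f Df n (f x) * Df x := by
  simp only [derivIter, prod_range_succ', Function.iterate_succ_apply,
    Function.iterate_zero_apply]

theorem twistedTerm_zero (x : α) : twistedTerm f Df v x 0 = v x / Df x := by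
  simp [twistedTerm, derivIter]

theorem twistedTerm_succ (x : α) (i : ℕ) :
    twistedTerm f Df v x (i + 1) = twistedTerm f Df v (f x) i / Df x := by
  rw [twistedTerm, twistedTerm, derivIter_succ', Function.iterate_succ_apply, div_div]

theorem pow_le_norm_derivIter {lam : ℝ} {x : α} (hlam : 0 ≤ lam)
    (hexp : ∀ j, lam ≤ ‖Df (f^[j] x)‖) (n : ℕ) : lam ^ n ≤ ‖derivIter f Df n x‖ := by
  rw [derivIter, norm_prod]
  calc lam ^ n = ∏ _j ∈ range n, lam := by rw [prod_const, card_range]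
    _ ≤ ∏ j ∈ range n, ‖Df (f^[j] x)‖ := prod_le_prod (fun _ _ => hlam) fun j _ => hexp j

theorem norm_twistedTerm_le {lam M : ℝ} {x : α} (hlam : 0 < lam)
    (hexp : ∀ j, lam ≤ ‖Df (f^[j] x)‖) (hv : ∀ j, ‖v (f^[j] x)‖ ≤ M) (i : ℕ) :
    ‖twistedTerm f Df v x i‖ ≤ M * lam⁻¹ ^ (i + 1) := by
  have hM : 0 ≤ M := (norm_nonneg _).trans (hv 0)
  rw [twistedTerm, norm_div, inv_pow, ← div_eq_mul_inv]
  exact div_le_div₀ hM (hv i) (pow_pos hlam _) (pow_le_norm_derivIter hlam.le hexp _)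

theorem hasSum_mul_inv_pow_succ {lam : ℝ} (hlam : 1 < lam) (M : ℝ) :
    HasSum (fun i : ℕ => M * lam⁻¹ ^ (i + 1)) (M / (lam - 1)) := by
  have hpos : 0 < lam := zero_lt_one.trans hlam
  have hgeom := (hasSum_geometric_of_lt_one (inv_nonneg.2 hpos.le)
    (inv_lt_one_of_one_lt₀ hlam)).mul_left (M * lam⁻¹)
  have hsum : M * lam⁻¹ * (1 - lam⁻¹)⁻¹ = M / (lam - 1) := by
    field_simp [(sub_pos.2 hlam).ne']
  simpa only [pow_succ', mul_assoc, hsum] using hgeom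

theorem summable_twistedTerm [CompleteSpace 𝕜] {lam M : ℝ} {x : α} (hlam : 1 < lam)
    (hexp : ∀ j, lam ≤ ‖Df (f^[j] x)‖) (hv : ∀ j, ‖v (f^[j] x)‖ ≤ M) :
    Summable (twistedTerm f Df v x) :=
  .of_norm_bounded (hasSum_mul_inv_pow_succ hlam M).summable
    (norm_twistedTerm_le (zero_lt_one.trans hlam) hexp hv)

theorem norm_twistedSolution_le {lam M : ℝ} {x : α} (hlam : 1 < lam)
    (hexp : ∀ j, lam ≤ ‖Df (f^[j] x)‖) (hv : ∀ j, ‖v (f^[j] x)‖ ≤ M) :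
    ‖twistedSolution f Df v x‖ ≤ M / (lam - 1) := by
  rw [twistedSolution, norm_neg]
  exact tsum_of_norm_bounded (hasSum_mul_inv_pow_succ hlam M)
    (norm_twistedTerm_le (zero_lt_one.trans hlam) hexp hv)

theorem twistedSolution_eq {x : α} (hs : Summable (twistedTerm f Df v x)) :
    twistedSolution f Df v x = -(v x - twistedSolution f Df v (f x)) / Df x := by
  rw [twistedSolution, twistedSolution, hs.tsum_eq_zero_add, twistedTerm_zero]
  simp only [twistedTerm_succ, tsum_div_const]
  ring

theorem twisted_cohomological_equation {x : α} (hs : Summable (twistedTerm f Df v x))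
    (hDf : Df x ≠ 0) :
    v x = twistedSolution f Df v (f x) - Df x * twistedSolution f Df v x := by
  rw [twistedSolution_eq hs]
  field_simp
  ring

end TwistedCohomology

open TwistedCohomology in
/-- For a piecewise expanding unimodal map `f` and bounded `v`, on the set
`D` of points of `I` whose forward orbit avoids the critical point `c = 0`, the function
`α(x) = -∑_{i≥0} v(f^i(x))/Df^{i+1}(x)` is well defined (the series converges), bounded
by `|v|_∞/(lam-1)`, and solves the twisted cohomological equation
`v(x) = α(f(x)) - Df(x)·α(x)`.  Here `Df^{i+1}(x) = ∏_{j=0}^{i} Df(f^j(x))`. -/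
theorem twisted_cohomological_solution
    (f Df : ℝ → ℝ) (lam : ℝ) (hlam : 1 < lam)
    (hmap : Set.MapsTo f (Set.Icc (-1 : ℝ) 1) (Set.Icc (-1 : ℝ) 1))
    (hDf : ∀ x ∈ Set.Icc (-1 : ℝ) 1, x ≠ 0 → lam ≤ |Df x|)
    (v : ℝ → ℝ) (M : ℝ) (hv : ∀ x ∈ Set.Icc (-1 : ℝ) 1, |v x| ≤ M) :
    ∀ x ∈ Set.Icc (-1 : ℝ) 1, (∀ i : ℕ, f^[i] x ≠ 0) →
      Summable (fun i : ℕ => v (f^[i] x) / ∏ j ∈ Finset.range (i + 1), Df (f^[j] x)) ∧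
      |(-∑' i : ℕ, v (f^[i] x) / ∏ j ∈ Finset.range (i + 1), Df (f^[j] x))|
        ≤ M / (lam - 1) ∧
      v x = (-∑' i : ℕ, v (f^[i] (f x)) / ∏ j ∈ Finset.range (i + 1), Df (f^[j] (f x)))
              - Df x * (-∑' i : ℕ, v (f^[i] x) / ∏ j ∈ Finset.range (i + 1), Df (f^[j] x)) := by
  intro x hx hx0
  have horbit : ∀ j, f^[j] x ∈ Set.Icc (-1 : ℝ) 1 := fun j => hmap.iterate j hx
  have hexp : ∀ j, lam ≤ ‖Df (f^[j] x)‖ := fun j => hDf _ (horbit j) (hx0 j)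
  have hvx : ∀ j, ‖v (f^[j] x)‖ ≤ M := fun j => hv _ (horbit j)
  have hs := summable_twistedTerm hlam hexp hvx
  have hDfx : Df x ≠ 0 :=
    norm_pos_iff.1 ((zero_lt_one.trans hlam).trans_le (hexp 0))
  exact ⟨hs, norm_twistedSolution_le hlam hexp hvx, twisted_cohomological_equation hs hDfx⟩
end

section
/- Let f₀ be a piecewise expanding C^1 unimodal map whose critical point is not periodic. Then for every η > 0 there exists a neighborhood W of f₀ in the C^1 topology (within piecewise expanding unimodal maps) such that |J(f,v) - J(f₀,v)| ≤ η·|v|₁ for every piecewise C^1 function v and every f ∈ W. -/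
/-- `f` is a piecewise expanding C¹ unimodal map on `I = [-1,1]` with critical point
`c = 0`, expansion constant `lam`, and piecewise derivative `Df`. -/
def PEUnimodal (f Df : ℝ → ℝ) (lam : ℝ) : Prop :=
  1 < lam ∧
  Set.MapsTo f (Set.Icc (-1 : ℝ) 1) (Set.Icc (-1 : ℝ) 1) ∧
  f (-1) = -1 ∧ f 1 = -1 ∧ f 0 ≤ 1 ∧
  ContinuousOn f (Set.Icc (-1 : ℝ) 1) ∧
  ContinuousOn Df (Set.Ico (-1 : ℝ) 0) ∧ ContinuousOn Df (Set.Ioc (0 : ℝ) 1) ∧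
  (∀ x ∈ Set.Ico (-1 : ℝ) 0,
    HasDerivWithinAt f (Df x) (Set.Icc (-1 : ℝ) 0) x ∧ lam ≤ Df x) ∧
  (∀ x ∈ Set.Ioc (0 : ℝ) 1,
    HasDerivWithinAt f (Df x) (Set.Icc (0 : ℝ) 1) x ∧ Df x ≤ -lam)

/-- The linear functional `J(f,·)`: if the critical point `0` is periodic with prime
period `p`, `J(f,v) = ∑_{i<p} v(f^i(0))/Df^i(f(0))`, otherwise
`J(f,v) = ∑_{i≥0} v(f^i(0))/Df^i(f(0))`, where `Df^i(f(0)) = ∏_{j=1}^{i} Df(f^j(0))`. -/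
noncomputable def Jfun (f Df v : ℝ → ℝ) : ℝ := by
  classical
  exact if h : ∃ p : ℕ, 0 < p ∧ f^[p] 0 = 0 then
    ∑ i ∈ Finset.range (Nat.find h),
      v (f^[i] 0) / ∏ j ∈ Finset.Icc 1 i, Df (f^[j] 0)
  else
    ∑' i : ℕ, v (f^[i] 0) / ∏ j ∈ Finset.Icc 1 i, Df (f^[j] 0)

/-!
Split `J(f, v)` into its first `N` terms and a tail. Expansion `|Df| ≥ μ > 1` survives
C¹-perturbation, so the tail is at most `|v|₁ μ⁻ᴺ / (1 - μ⁻¹)` for every nearby `f`, also for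
those whose critical point is periodic, as their period then exceeds `N`. The first `N` points of
the `f₀`-orbit of `0` avoid the critical point, where `v` and `Df₀` may jump, so each of the first
`N` terms depends continuously on `(f, Df)`, uniformly in `v` with `|v|₁ ≤ 1`.
-/

open Set Filter Topology

/-- The derivative `Df^i(f(0))` along the orbit of the critical point. -/
def orbitDeriv (f Df : ℝ → ℝ) (i : ℕ) : ℝ :=
  ∏ j ∈ Finset.Icc 1 i, Df (f^[j] 0)

noncomputable def Jterm (f Df v : ℝ → ℝ) (i : ℕ) : ℝ :=
  v (f^[i] 0) / orbitDeriv f Df i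

section Elementary

lemma zero_mem_Icc_neg_one_one : (0 : ℝ) ∈ Icc (-1) 1 := by norm_num

lemma abs_sub_le_of_lipschitzOnWith_Icc_zero {v : ℝ → ℝ} {K : NNReal} {a b x y : ℝ}
    (hL : LipschitzOnWith K v (Icc a 0)) (hR : LipschitzOnWith K v (Icc 0 b))
    (hx : x ∈ Icc a b) (hy : y ∈ Icc a b) (hxy : 0 ≤ x * y) :
    |v x - v y| ≤ K * |x - y| := by
  simp only [← Real.dist_eq]
  rcases mul_nonneg_iff.1 hxy with ⟨hx0, hy0⟩ | ⟨hx0, hy0⟩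
  · exact hR.dist_le_mul x ⟨hx0, hx.2⟩ y ⟨hy0, hy.2⟩
  · exact hL.dist_le_mul x ⟨hx.1, hx0⟩ y ⟨hy.1, hy0⟩

lemma abs_div_sub_div_le {a b P Q C d : ℝ} (hab : |a - b| ≤ C * d) (hb : |b| ≤ C) :
    |a / P - b / Q| ≤ C * (d / |P| + |P⁻¹ - Q⁻¹|) := by
  have hC : 0 ≤ C := (abs_nonneg b).trans hb
  calc |a / P - b / Q| = |(a - b) / P + b * (P⁻¹ - Q⁻¹)| := by congr 1; ring
    _ ≤ |a - b| / |P| + |b| * |P⁻¹ - Q⁻¹| := by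
        rw [← abs_div, ← abs_mul]; exact abs_add_le _ _
    _ ≤ C * d / |P| + C * |P⁻¹ - Q⁻¹| := by
        gcongr
    _ = C * (d / |P| + |P⁻¹ - Q⁻¹|) := by ring

end Elementary

namespace PEUnimodal

variable {f Df : ℝ → ℝ} {lam : ℝ}

lemma mapsTo (hf : PEUnimodal f Df lam) : MapsTo f (Icc (-1) 1) (Icc (-1) 1) := hf.2.1

lemma continuousOn (hf : PEUnimodal f Df lam) : ContinuousOn f (Icc (-1) 1) := hf.2.2.2.2.2.1

lemma le_abs_deriv (hf : PEUnimodal f Df lam) : ∀ x ∈ Icc (-1 : ℝ) 1, x ≠ 0 → lam ≤ |Df x| := by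
  obtain ⟨-, -, -, -, -, -, -, -, hL, hR⟩ := hf
  intro x hx hx0
  rcases hx0.lt_or_gt with h | h
  · exact (hL x ⟨hx.1, h⟩).2.trans (le_abs_self _)
  · exact (le_neg.2 (hR x ⟨h, hx.2⟩).2).trans (neg_le_abs _)

lemma continuousOn_deriv (hf : PEUnimodal f Df lam) : ContinuousOn Df (Icc (-1 : ℝ) 1 \ {0}) := by
  obtain ⟨-, -, -, -, -, -, hcL, hcR, -, -⟩ := hf
  rintro x ⟨hx, hx0 : x ≠ 0⟩
  rcases hx0.lt_or_gt with h | h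
  · refine (hcL x ⟨hx.1, h⟩).mono_of_mem_nhdsWithin
      (mem_nhdsWithin.2 ⟨Iio 0, isOpen_Iio, h, fun z ⟨hz, hzI, _⟩ => ⟨hzI.1, hz⟩⟩)
  · refine (hcR x ⟨h, hx.2⟩).mono_of_mem_nhdsWithin
      (mem_nhdsWithin.2 ⟨Ioi 0, isOpen_Ioi, h, fun z ⟨hz, hzI, _⟩ => ⟨hz, hzI.2⟩⟩)

end PEUnimodal

section Tail

variable {f Df v : ℝ → ℝ} {μ Cv : ℝ}

lemma Jfun_of_forall_iterate_ne (h : ∀ p, 0 < p → f^[p] 0 ≠ 0) :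
    Jfun f Df v = ∑' i, Jterm f Df v i := by
  rw [Jfun, dif_neg (by simpa using h)]
  rfl

lemma Jfun_of_isPeriodic (h : ∃ p, 0 < p ∧ f^[p] 0 = 0) :
    ∃ p, 0 < p ∧ f^[p] 0 = 0 ∧ (∀ j, 0 < j → j < p → f^[j] 0 ≠ 0) ∧
      Jfun f Df v = ∑ i ∈ Finset.range p, Jterm f Df v i := by
  classical
  refine ⟨Nat.find h, (Nat.find_spec h).1, (Nat.find_spec h).2,
    fun j hj hjp hfj => Nat.find_min h hjp ⟨hj, hfj⟩, ?_⟩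
  rw [Jfun, dif_pos h]
  rfl

lemma pow_le_abs_orbitDeriv (hm : MapsTo f (Icc (-1) 1) (Icc (-1) 1))
    (hDf : ∀ x ∈ Icc (-1 : ℝ) 1, x ≠ 0 → μ ≤ |Df x|) (hμ : 0 ≤ μ) {i : ℕ}
    (hi : ∀ j ∈ Finset.Icc 1 i, f^[j] 0 ≠ 0) : μ ^ i ≤ |orbitDeriv f Df i| := by
  rw [orbitDeriv, Finset.abs_prod]
  calc μ ^ i = ∏ _j ∈ Finset.Icc 1 i, μ := by simp
    _ ≤ _ := Finset.prod_le_prod (fun _ _ => hμ) fun j hj =>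
        hDf _ (hm.iterate j zero_mem_Icc_neg_one_one) (hi j hj)

lemma abs_Jterm_le (hm : MapsTo f (Icc (-1) 1) (Icc (-1) 1))
    (hDf : ∀ x ∈ Icc (-1 : ℝ) 1, x ≠ 0 → μ ≤ |Df x|) (hμ : 0 < μ)
    (hv : ∀ x ∈ Icc (-1 : ℝ) 1, |v x| ≤ Cv) {i : ℕ} (hi : ∀ j ∈ Finset.Icc 1 i, f^[j] 0 ≠ 0) :
    |Jterm f Df v i| ≤ Cv * μ⁻¹ ^ i := by
  have hCv : 0 ≤ Cv := (abs_nonneg _).trans (hv 0 zero_mem_Icc_neg_one_one)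
  rw [Jterm, abs_div, inv_pow, ← div_eq_mul_inv]
  exact div_le_div₀ hCv (hv _ (hm.iterate i zero_mem_Icc_neg_one_one)) (pow_pos hμ i)
    (pow_le_abs_orbitDeriv hm hDf hμ.le hi)

lemma abs_Jfun_sub_sum_le (hm : MapsTo f (Icc (-1) 1) (Icc (-1) 1))
    (hDf : ∀ x ∈ Icc (-1 : ℝ) 1, x ≠ 0 → μ ≤ |Df x|) (hμ : 1 < μ)
    (hv : ∀ x ∈ Icc (-1 : ℝ) 1, |v x| ≤ Cv) {N : ℕ} (hN : ∀ j ∈ Finset.Icc 1 N, f^[j] 0 ≠ 0) :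
    |Jfun f Df v - ∑ i ∈ Finset.range N, Jterm f Df v i| ≤ Cv * μ⁻¹ ^ N / (1 - μ⁻¹) := by
  have hCv : 0 ≤ Cv := (abs_nonneg _).trans (hv 0 zero_mem_Icc_neg_one_one)
  have hρ : μ⁻¹ < 1 := inv_lt_one_of_one_lt₀ hμ
  have hstep : ∀ k, (∀ j ∈ Finset.Icc 1 k, f^[j] 0 ≠ 0) →
      dist (∑ i ∈ Finset.range k, Jterm f Df v i) (∑ i ∈ Finset.range (k + 1), Jterm f Df v i)
        ≤ Cv * μ⁻¹ ^ k := fun k hk => by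
    rw [Finset.sum_range_succ, dist_self_add_right, Real.norm_eq_abs]
    exact abs_Jterm_le hm hDf (by linarith) hv hk
  rw [abs_sub_comm, ← Real.dist_eq]
  by_cases hper : ∃ p, 0 < p ∧ f^[p] 0 = 0
  · obtain ⟨p, hp, hfp, hmin, hJ⟩ := Jfun_of_isPeriodic (Df := Df) (v := v) hper
    have hNp : N < p := not_le.1 fun h => hN p (Finset.mem_Icc.2 ⟨hp, h⟩) hfp
    rw [hJ]
    calc dist _ _ ≤ ∑ i ∈ Finset.Ico N p, Cv * μ⁻¹ ^ i :=
          dist_le_Ico_sum_of_dist_le hNp.le fun {k} _ hk => hstep k fun j hj =>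
            hmin j (Finset.mem_Icc.1 hj).1 ((Finset.mem_Icc.1 hj).2.trans_lt hk)
      _ = Cv * ∑ i ∈ Finset.Ico N p, μ⁻¹ ^ i := (Finset.mul_sum _ _ _).symm
      _ ≤ Cv * (μ⁻¹ ^ N / (1 - μ⁻¹)) := by
          gcongr; exact geom_sum_Ico_le_of_lt_one (by positivity) hρ
      _ = Cv * μ⁻¹ ^ N / (1 - μ⁻¹) := (mul_div_assoc _ _ _).symm
  · push Not at hper
    have hsum : Summable (Jterm f Df v) :=
      .of_norm_bounded ((summable_geometric_of_lt_one (by positivity) hρ).mul_left Cv) fun i =>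
        abs_Jterm_le hm hDf (by linarith) hv fun j hj => hper j (Finset.mem_Icc.1 hj).1
    rw [Jfun_of_forall_iterate_ne hper]
    exact dist_le_of_le_geometric_of_tendsto μ⁻¹ Cv hρ
      (fun k => hstep k fun j hj => hper j (Finset.mem_Icc.1 hj).1) hsum.hasSum.tendsto_sum_nat N

end Tail

/-- The neighbourhoods of the statement, as sets of pairs `(f, Df)`; `f` is also required to map
`[-1, 1]` into itself, as every `PEUnimodal` map does. -/
def c1Ball (f₀ Df₀ : ℝ → ℝ) (r : ℝ) : Set ((ℝ → ℝ) × (ℝ → ℝ)) :=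
  {p | MapsTo p.1 (Icc (-1) 1) (Icc (-1) 1) ∧ (∀ x ∈ Icc (-1 : ℝ) 1, |p.1 x - f₀ x| ≤ r) ∧
    ∀ x ∈ Icc (-1 : ℝ) 1, x ≠ 0 → |p.2 x - Df₀ x| ≤ r}

def c1Nhds (f₀ Df₀ : ℝ → ℝ) : Filter ((ℝ → ℝ) × (ℝ → ℝ)) :=
  ⨅ (r : ℝ) (_ : 0 < r), 𝓟 (c1Ball f₀ Df₀ r)

lemma c1Ball_mono {f₀ Df₀ : ℝ → ℝ} {r s : ℝ} (h : r ≤ s) : c1Ball f₀ Df₀ r ⊆ c1Ball f₀ Df₀ s :=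
  fun _ ⟨hm, hf, hDf⟩ => ⟨hm, fun x hx => (hf x hx).trans h, fun x hx hx0 => (hDf x hx hx0).trans h⟩

namespace c1Nhds

variable {f₀ Df₀ : ℝ → ℝ}

lemma hasBasis : (c1Nhds f₀ Df₀).HasBasis (fun r => 0 < r) (c1Ball f₀ Df₀) :=
  hasBasis_biInf_principal' (fun r hr s hs => ⟨min r s, lt_min hr hs,
    c1Ball_mono (min_le_left r s), c1Ball_mono (min_le_right r s)⟩) ⟨1, one_pos⟩

lemma eventually_mapsTo : ∀ᶠ p in c1Nhds f₀ Df₀, MapsTo p.1 (Icc (-1) 1) (Icc (-1) 1) :=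
  hasBasis.eventually_iff.2 ⟨1, one_pos, fun _ hp => hp.1⟩

lemma tendstoUniformlyOn_fst :
    TendstoUniformlyOn (fun p : (ℝ → ℝ) × (ℝ → ℝ) => p.1) f₀ (c1Nhds f₀ Df₀) (Icc (-1) 1) :=
  Metric.tendstoUniformlyOn_iff.2 fun ε hε => hasBasis.eventually_iff.2
    ⟨ε / 2, half_pos hε, fun p hp x hx => by
      rw [dist_comm, Real.dist_eq]; linarith [hp.2.1 x hx]⟩

lemma tendstoUniformlyOn_snd :
    TendstoUniformlyOn (fun p : (ℝ → ℝ) × (ℝ → ℝ) => p.2) Df₀ (c1Nhds f₀ Df₀)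
      (Icc (-1) 1 \ {0}) :=
  Metric.tendstoUniformlyOn_iff.2 fun ε hε => hasBasis.eventually_iff.2
    ⟨ε / 2, half_pos hε, fun p hp x ⟨hx, hx0⟩ => by
      rw [dist_comm, Real.dist_eq]; linarith [hp.2.2 x hx hx0]⟩

lemma tendsto_iterate (hc : ContinuousOn f₀ (Icc (-1) 1))
    (hm : MapsTo f₀ (Icc (-1) 1) (Icc (-1) 1)) (i : ℕ) :
    Tendsto (fun p => p.1^[i] 0) (c1Nhds f₀ Df₀) (𝓝[Icc (-1) 1] (f₀^[i] 0)) := by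
  have hmem : ∀ᶠ p in c1Nhds f₀ Df₀, ∀ k, p.1^[k] 0 ∈ Icc (-1 : ℝ) 1 :=
    eventually_mapsTo.mono fun p hp k => hp.iterate k zero_mem_Icc_neg_one_one
  refine tendsto_nhdsWithin_iff.2 ⟨?_, hmem.mono fun p hp => hp i⟩
  induction i with
  | zero => exact tendsto_const_nhds
  | succ i ih =>
    simp only [Function.iterate_succ_apply']
    exact tendstoUniformlyOn_fst.tendsto_comp (hc _ (hm.iterate i zero_mem_Icc_neg_one_one))
      (tendsto_nhdsWithin_iff.2 ⟨ih, hmem.mono fun p hp => hp i⟩)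

end c1Nhds

section Continuity

variable {f₀ Df₀ : ℝ → ℝ} {lam₀ : ℝ}

open c1Nhds

lemma tendsto_deriv_iterate (hf₀ : PEUnimodal f₀ Df₀ lam₀) {i : ℕ} (hi : f₀^[i] 0 ≠ 0) :
    Tendsto (fun p => p.2 (p.1^[i] 0)) (c1Nhds f₀ Df₀) (𝓝 (Df₀ (f₀^[i] 0))) := by
  have hx := tendsto_iterate (Df₀ := Df₀) hf₀.continuousOn hf₀.mapsTo i
  refine tendstoUniformlyOn_snd.tendsto_comp
    (hf₀.continuousOn_deriv _ ⟨hf₀.mapsTo.iterate i zero_mem_Icc_neg_one_one, hi⟩)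
    (tendsto_nhdsWithin_iff.2 ⟨hx.mono_right nhdsWithin_le_nhds, ?_⟩)
  filter_upwards [tendsto_nhdsWithin_iff.1 hx |>.2,
    (hx.mono_right nhdsWithin_le_nhds).eventually_ne hi] with p hmem hne using ⟨hmem, hne⟩

lemma tendsto_orbitDeriv (hf₀ : PEUnimodal f₀ Df₀ lam₀)
    (hnonper : ∀ i : ℕ, 1 ≤ i → f₀^[i] 0 ≠ 0) (i : ℕ) :
    Tendsto (fun p => orbitDeriv p.1 p.2 i) (c1Nhds f₀ Df₀) (𝓝 (orbitDeriv f₀ Df₀ i)) :=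
  tendsto_finsetProd _ fun j hj => tendsto_deriv_iterate hf₀ (hnonper j (Finset.mem_Icc.1 hj).1)

lemma orbitDeriv_ne_zero (hf₀ : PEUnimodal f₀ Df₀ lam₀)
    (hnonper : ∀ i : ℕ, 1 ≤ i → f₀^[i] 0 ≠ 0) (i : ℕ) : orbitDeriv f₀ Df₀ i ≠ 0 := by
  have hlam : 0 < lam₀ := one_pos.trans hf₀.1
  have hQ : lam₀ ^ i ≤ |orbitDeriv f₀ Df₀ i| := pow_le_abs_orbitDeriv hf₀.mapsTo
    hf₀.le_abs_deriv hlam.le fun j hj => hnonper j (Finset.mem_Icc.1 hj).1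
  exact abs_pos.1 ((pow_pos hlam i).trans_le hQ)

lemma eventually_mul_iterate_nonneg (hf₀ : PEUnimodal f₀ Df₀ lam₀) (i : ℕ) :
    ∀ᶠ p in c1Nhds f₀ Df₀, 0 ≤ p.1^[i] 0 * f₀^[i] 0 := by
  rcases eq_or_ne (f₀^[i] 0) 0 with h | h
  · exact .of_forall fun p => by rw [h, mul_zero]
  · have hx := (tendsto_iterate (Df₀ := Df₀) hf₀.continuousOn hf₀.mapsTo i).mono_right
      nhdsWithin_le_nhds
    exact ((hx.mul_const _).eventually (lt_mem_nhds (mul_self_pos.2 h))).mono fun _ hp => hp.le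

noncomputable def orbitError (f₀ Df₀ : ℝ → ℝ) (p : (ℝ → ℝ) × (ℝ → ℝ)) (i : ℕ) : ℝ :=
  |p.1^[i] 0 - f₀^[i] 0| / |orbitDeriv p.1 p.2 i| +
    |(orbitDeriv p.1 p.2 i)⁻¹ - (orbitDeriv f₀ Df₀ i)⁻¹|

lemma abs_Jterm_sub_le {p : (ℝ → ℝ) × (ℝ → ℝ)} {v : ℝ → ℝ} {Cv : ℝ} {i : ℕ}
    (hf₀ : MapsTo f₀ (Icc (-1) 1) (Icc (-1) 1)) (hm : MapsTo p.1 (Icc (-1) 1) (Icc (-1) 1))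
    (hside : 0 ≤ p.1^[i] 0 * f₀^[i] 0) (hv : ∀ x ∈ Icc (-1 : ℝ) 1, |v x| ≤ Cv)
    (hL : LipschitzOnWith (Real.toNNReal Cv) v (Icc (-1) 0))
    (hR : LipschitzOnWith (Real.toNNReal Cv) v (Icc 0 1)) :
    |Jterm p.1 p.2 v i - Jterm f₀ Df₀ v i| ≤ Cv * orbitError f₀ Df₀ p i := by
  have hCv : 0 ≤ Cv := (abs_nonneg _).trans (hv 0 zero_mem_Icc_neg_one_one)
  have hx := hm.iterate i zero_mem_Icc_neg_one_one
  have hy := hf₀.iterate i zero_mem_Icc_neg_one_one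
  refine abs_div_sub_div_le ?_ (hv _ hy)
  simpa only [Real.coe_toNNReal _ hCv] using
    abs_sub_le_of_lipschitzOnWith_Icc_zero hL hR hx hy hside

lemma tendsto_orbitError (hf₀ : PEUnimodal f₀ Df₀ lam₀)
    (hnonper : ∀ i : ℕ, 1 ≤ i → f₀^[i] 0 ≠ 0) (i : ℕ) :
    Tendsto (orbitError f₀ Df₀ · i) (c1Nhds f₀ Df₀) (𝓝 0) := by
  have hx := (tendsto_iterate (Df₀ := Df₀) hf₀.continuousOn hf₀.mapsTo i).mono_right
    nhdsWithin_le_nhds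
  have hP := tendsto_orbitDeriv hf₀ hnonper i
  have hQ := orbitDeriv_ne_zero hf₀ hnonper i
  simpa only [orbitError, Pi.div_apply, sub_self, abs_zero, zero_div, add_zero] using
    ((hx.sub_const (f₀^[i] 0)).abs.div hP.abs (abs_ne_zero.2 hQ)).add
    ((hP.inv₀ hQ).sub_const (orbitDeriv f₀ Df₀ i)⁻¹).abs

lemma eventually_abs_sum_Jterm_sub_le (hf₀ : PEUnimodal f₀ Df₀ lam₀)
    (hnonper : ∀ i : ℕ, 1 ≤ i → f₀^[i] 0 ≠ 0) (N : ℕ) {ε : ℝ} (hε : 0 < ε) :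
    ∀ᶠ p in c1Nhds f₀ Df₀, ∀ (v : ℝ → ℝ) (Cv : ℝ), (∀ x ∈ Icc (-1 : ℝ) 1, |v x| ≤ Cv) →
      LipschitzOnWith (Real.toNNReal Cv) v (Icc (-1) 0) →
      LipschitzOnWith (Real.toNNReal Cv) v (Icc 0 1) →
      |∑ i ∈ Finset.range N, Jterm p.1 p.2 v i - ∑ i ∈ Finset.range N, Jterm f₀ Df₀ v i|
        ≤ Cv * ε := by
  have herr : Tendsto (fun p => ∑ i ∈ Finset.range N, orbitError f₀ Df₀ p i) (c1Nhds f₀ Df₀)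
      (𝓝 0) := by
    simpa using tendsto_finsetSum (Finset.range N) fun i _ => tendsto_orbitError hf₀ hnonper i
  filter_upwards [(tendsto_order.1 herr).2 ε hε,
    (Finset.range N).eventually_all.2 fun i _ => eventually_mul_iterate_nonneg hf₀ i,
    eventually_mapsTo] with p herr hside hm
  intro v Cv hv hL hR
  have hCv : 0 ≤ Cv := (abs_nonneg _).trans (hv 0 zero_mem_Icc_neg_one_one)
  calc _ = |∑ i ∈ Finset.range N, (Jterm p.1 p.2 v i - Jterm f₀ Df₀ v i)| := by
        rw [Finset.sum_sub_distrib]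
    _ ≤ ∑ i ∈ Finset.range N, Cv * orbitError f₀ Df₀ p i :=
        (Finset.abs_sum_le_sum_abs _ _).trans <| Finset.sum_le_sum fun i hi =>
          abs_Jterm_sub_le hf₀.mapsTo hm (hside i hi) hv hL hR
    _ ≤ Cv * ε := by
        rw [← Finset.mul_sum]
        exact mul_le_mul_of_nonneg_left herr.le hCv

lemma eventually_le_abs_deriv (hf₀ : PEUnimodal f₀ Df₀ lam₀) {μ : ℝ} (hμ : μ < lam₀) :
    ∀ᶠ p in c1Nhds f₀ Df₀, ∀ x ∈ Icc (-1 : ℝ) 1, x ≠ 0 → μ ≤ |p.2 x| := by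
  filter_upwards [Metric.tendstoUniformlyOn_iff.1 tendstoUniformlyOn_snd _ (sub_pos.2 hμ)]
    with p hp x hx hx0
  have hclose := hp x ⟨hx, hx0⟩
  rw [Real.dist_eq] at hclose
  linarith [hf₀.le_abs_deriv x hx hx0, abs_sub_abs_le_abs_sub (Df₀ x) (p.2 x)]

lemma eventually_iterate_ne_zero (hf₀ : PEUnimodal f₀ Df₀ lam₀)
    (hnonper : ∀ i : ℕ, 1 ≤ i → f₀^[i] 0 ≠ 0) (N : ℕ) :
    ∀ᶠ p in c1Nhds f₀ Df₀, ∀ j ∈ Finset.Icc 1 N, p.1^[j] 0 ≠ 0 :=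
  (Finset.Icc 1 N).eventually_all.2 fun j hj =>
    ((tendsto_iterate hf₀.continuousOn hf₀.mapsTo j).mono_right nhdsWithin_le_nhds).eventually_ne
      (hnonper j (Finset.mem_Icc.1 hj).1)

lemma eventually_abs_Jfun_sub_le (hf₀ : PEUnimodal f₀ Df₀ lam₀)
    (hnonper : ∀ i : ℕ, 1 ≤ i → f₀^[i] 0 ≠ 0) {η : ℝ} (hη : 0 < η) :
    ∀ᶠ p in c1Nhds f₀ Df₀, ∀ (v : ℝ → ℝ) (Cv : ℝ), (∀ x ∈ Icc (-1 : ℝ) 1, |v x| ≤ Cv) →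
      LipschitzOnWith (Real.toNNReal Cv) v (Icc (-1) 0) →
      LipschitzOnWith (Real.toNNReal Cv) v (Icc 0 1) →
      |Jfun p.1 p.2 v - Jfun f₀ Df₀ v| ≤ η * Cv := by
  obtain ⟨μ, hμ, hμlam⟩ := exists_between hf₀.1
  have hρ : μ⁻¹ < 1 := inv_lt_one_of_one_lt₀ hμ
  obtain ⟨N, hN⟩ : ∃ N : ℕ, μ⁻¹ ^ N / (1 - μ⁻¹) ≤ η / 4 :=
    (((tendsto_pow_atTop_nhds_zero_of_lt_one (by positivity) hρ).div_const (1 - μ⁻¹)).eventually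
      (ge_mem_nhds (by rw [zero_div]; positivity))).exists
  filter_upwards [eventually_abs_sum_Jterm_sub_le hf₀ hnonper N (half_pos hη),
    eventually_le_abs_deriv hf₀ hμlam, eventually_iterate_ne_zero hf₀ hnonper N,
    eventually_mapsTo] with p hhead hDf hne hm
  intro v Cv hv hL hR
  have hCv : 0 ≤ Cv := (abs_nonneg _).trans (hv 0 zero_mem_Icc_neg_one_one)
  have htail : ∀ {g Dg : ℝ → ℝ}, MapsTo g (Icc (-1) 1) (Icc (-1) 1) →
      (∀ x ∈ Icc (-1 : ℝ) 1, x ≠ 0 → μ ≤ |Dg x|) → (∀ j ∈ Finset.Icc 1 N, g^[j] 0 ≠ 0) →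
      |Jfun g Dg v - ∑ i ∈ Finset.range N, Jterm g Dg v i| ≤ Cv * (η / 4) := fun hg hDg hgN =>
    (abs_Jfun_sub_sum_le hg hDg hμ hv hgN).trans <| by
      rw [mul_div_assoc]; exact mul_le_mul_of_nonneg_left hN hCv
  have h₀ := htail hf₀.mapsTo (fun x hx hx0 => hμlam.le.trans (hf₀.le_abs_deriv x hx hx0))
    fun j hj => hnonper j (Finset.mem_Icc.1 hj).1
  have h := htail hm hDf hne
  have := hhead v Cv hv hL hR
  rw [abs_le] at h₀ h this ⊢
  constructor <;> linarith

end Continuity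

/-- Proposition 3.2 A: if the critical point of `f₀` is not periodic,
then for every `η > 0` there is a C¹-neighborhood of `f₀` (radius `r` in sup norm on the
map and on its piecewise derivative) such that `|J(f,v) - J(f₀,v)| ≤ η·|v|₁` for every
piecewise C¹ function `v` (with `Cv` a bound for both `sup |v|` and the Lipschitz
constants of `v` on the two halves, as provided by `|v|₁`) and every piecewise expanding
unimodal `f` in that neighborhood. -/
theorem J_continuous_at_nonperiodic
    (f₀ Df₀ : ℝ → ℝ) (lam₀ : ℝ) (hf₀ : PEUnimodal f₀ Df₀ lam₀)
    (hnonper : ∀ i : ℕ, 1 ≤ i → f₀^[i] 0 ≠ 0) :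
    ∀ η > (0 : ℝ), ∃ r > (0 : ℝ), ∀ (f Df : ℝ → ℝ) (lam : ℝ),
      PEUnimodal f Df lam →
      (∀ x ∈ Set.Icc (-1 : ℝ) 1, |f x - f₀ x| ≤ r) →
      (∀ x ∈ Set.Icc (-1 : ℝ) 1, x ≠ 0 → |Df x - Df₀ x| ≤ r) →
      ∀ (v : ℝ → ℝ) (Cv : ℝ),
        (∀ x ∈ Set.Icc (-1 : ℝ) 1, |v x| ≤ Cv) →
        LipschitzOnWith (Real.toNNReal Cv) v (Set.Icc (-1 : ℝ) 0) →
        LipschitzOnWith (Real.toNNReal Cv) v (Set.Icc (0 : ℝ) 1) →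
        |Jfun f Df v - Jfun f₀ Df₀ v| ≤ η * Cv := by
  intro η hη
  obtain ⟨r, hr, hball⟩ :=
    c1Nhds.hasBasis.eventually_iff.1 (eventually_abs_Jfun_sub_le hf₀ hnonper hη)
  exact ⟨r, hr, fun f Df _ hf hfr hDfr => @hball (f, Df) ⟨hf.mapsTo, hfr, hDfr⟩⟩
end

section
/- Let f_t be a C^1 family of piecewise expanding C^1 unimodal maps for which the set of critical relations R_t = {(i,j) : f_t^i(c) = f_t^j(c), i < j} is constant for small t. Then the itinerary of the critical point c under f_t is independent of t for small t. -/
/-!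
The relations `f_t^0(c) = f_t^n(c)` say exactly when `f_t^n(c)` hits the critical point, so
constancy of the critical relations means that `t ↦ f_t^n(c)` vanishes either everywhere or
nowhere on the parameter interval. A continuous function on an interval that vanishes either
everywhere or nowhere has constant sign, by the intermediate value theorem.
-/

open Function

theorem continuous_iterate_apply_of_continuous_uncurry {X Y : Type*} [TopologicalSpace X]
    [TopologicalSpace Y] {f : X → Y → Y} (hf : Continuous (uncurry f)) (y : Y) :
    ∀ n : ℕ, Continuous fun x => (f x)^[n] y
  | 0 => continuous_const
  | n + 1 => by
    simp only [iterate_succ_apply']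
    exact hf.comp (continuous_id.prodMk (continuous_iterate_apply_of_continuous_uncurry hf y n))

theorem IsPreconnected.sign_eq_of_forall_eq_zero_iff {X α : Type*} [TopologicalSpace X]
    [LinearOrder α] [TopologicalSpace α] [OrderClosedTopology α] [Zero α]
    {s : Set X} (hs : IsPreconnected s) {g : X → α} (hg : ContinuousOn g s) {a b : X}
    (ha : a ∈ s) (hb : b ∈ s) (hzero : ∀ x ∈ s, g x = 0 ↔ g a = 0) :
    SignType.sign (g b) = SignType.sign (g a) := by
  by_cases hga : g a = 0
  · rw [hga, (hzero b hb).2 hga]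
  have hne : ∀ x ∈ s, g x ≠ 0 := fun x hx h => hga ((hzero x hx).1 h)
  have no_zero_between : ∀ {x y}, x ∈ s → y ∈ s → g x < 0 → 0 < g y → False := by
    intro x y hx hy hgx hgy
    obtain ⟨z, hz, hgz⟩ := hs.intermediate_value hx hy hg ⟨hgx.le, hgy.le⟩
    exact hne z hz hgz
  rcases lt_trichotomy (g a) 0 with hneg | h0 | hpos
  · rcases lt_trichotomy (g b) 0 with h | h | h
    · rw [sign_neg h, sign_neg hneg]
    · exact absurd h (hne b hb)
    · exact (no_zero_between ha hb hneg h).elim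
  · exact absurd h0 hga
  · rcases lt_trichotomy (g b) 0 with h | h | h
    · exact (no_zero_between hb ha h hpos).elim
    · exact absurd h (hne b hb)
    · rw [sign_pos h, sign_pos hpos]

theorem itinerary_constant_of_critical_relations_constant_general
    (f : ℝ → ℝ → ℝ) (δ : ℝ)
    (hcont : Continuous fun p : ℝ × ℝ => f p.1 p.2)
    (hrel : ∀ t : ℝ, |t| < δ → ∀ i j : ℕ, i < j →
      ((f t)^[i] 0 = (f t)^[j] 0 ↔ (f 0)^[i] 0 = (f 0)^[j] 0)) :
    ∀ t : ℝ, |t| < δ → ∀ i : ℕ,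
      ((f t)^[i] 0 < 0 ↔ (f 0)^[i] 0 < 0) ∧
      ((f t)^[i] 0 = 0 ↔ (f 0)^[i] 0 = 0) ∧
      (0 < (f t)^[i] 0 ↔ 0 < (f 0)^[i] 0) := by
  have hzero : ∀ t, |t| < δ → ∀ i, ((f t)^[i] 0 = 0 ↔ (f 0)^[i] 0 = 0)
    | _, _, 0 => by simp
    | t, ht, n + 1 => by simpa [eq_comm] using hrel t ht 0 (n + 1) n.succ_pos
  intro t ht i
  have hball : ∀ {s : ℝ}, |s| < δ ↔ s ∈ Metric.ball 0 δ := by simp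
  have h0 : (0 : ℝ) ∈ Metric.ball 0 δ := Metric.mem_ball_self ((abs_nonneg t).trans_lt ht)
  have hsign : SignType.sign ((f t)^[i] 0) = SignType.sign ((f 0)^[i] 0) :=
    (convex_ball 0 δ).isPreconnected.sign_eq_of_forall_eq_zero_iff
      (continuous_iterate_apply_of_continuous_uncurry hcont 0 i).continuousOn h0 (hball.1 ht)
      fun s hs => hzero s (hball.2 hs) i
  exact ⟨by rw [← sign_eq_neg_one_iff, hsign, sign_eq_neg_one_iff], hzero t ht i,
    by rw [← sign_eq_one_iff, hsign, sign_eq_one_iff]⟩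

/-- If `f t` is a continuous (e.g. C¹) family of piecewise expanding
unimodal maps for which the set of critical relations
`R_t = {(i,j) : f_t^i(c) = f_t^j(c), i < j}` is constant for `|t| < δ`, then the
itinerary of the critical point `c = 0` (the sequence of symbols `L`/`C`/`R` recording
the sign of `f_t^i(c)`) is independent of `t` for `|t| < δ`. -/
theorem itinerary_constant_of_critical_relations_constant
    (f : ℝ → ℝ → ℝ) (δ : ℝ) (hδ : 0 < δ)
    (hcont : Continuous fun p : ℝ × ℝ => f p.1 p.2)
    (hrel : ∀ t : ℝ, |t| < δ → ∀ i j : ℕ, i < j →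
      ((f t)^[i] 0 = (f t)^[j] 0 ↔ (f 0)^[i] 0 = (f 0)^[j] 0)) :
    ∀ t : ℝ, |t| < δ → ∀ i : ℕ,
      ((f t)^[i] 0 < 0 ↔ (f 0)^[i] 0 < 0) ∧
      ((f t)^[i] 0 = 0 ↔ (f 0)^[i] 0 = 0) ∧
      (0 < (f t)^[i] 0 ↔ 0 < (f 0)^[i] 0) :=
  itinerary_constant_of_critical_relations_constant_general f δ hcont hrel
end

section
/- Let f_t, t ∈ (-δ, δ), be a C^1 family of piecewise expanding C^1 unimodal maps such that the set of critical relations R_t is constant in t. Then for each small t there exists an orientation-preserving homeomorphism h_t: I → I with h_t ∘ f_0 = f_t ∘ h_t. -/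
/-!
Since `s ↦ f_s^[k] 0` is continuous and two critical orbit points can only exchange their
order by colliding, constancy of the critical relations forces the critical orbits of
`F = f 0` and `G = f t` to be ordered alike. Start from any monotone self-map of `[-1, 1]`
carrying the critical orbit of `F` onto that of `G`, and iterate the pullback
`h ↦ G⁻¹ ∘ h ∘ F`, with the branch of `G⁻¹` taken on the lap of the point. The pullback
preserves these maps and contracts by the expansion constant of `G`, so it converges to a
monotone semiconjugacy `h ∘ F = G ∘ h` which maps each lap into itself. Such lap-preserving
semiconjugacies are unique, again by expansion; hence the one built with `F` and `G`
exchanged is a two-sided inverse of `h`, and a monotone bijection of `[-1, 1]` is a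
homeomorphism.
-/

open Set Filter Topology Function

namespace Unimodal

theorem continuous_iterate_apply {X Y : Type*} [TopologicalSpace X] [TopologicalSpace Y]
    {f : X → Y → Y} (hf : Continuous fun p : X × Y => f p.1 p.2) (n : ℕ) (y : Y) :
    Continuous fun s => (f s)^[n] y := by
  induction n with
  | zero => exact continuous_const
  | succ n ih =>
    simp only [iterate_succ_apply']
    exact hf.comp (continuous_id.prodMk ih)

theorem lt_of_forall_ne_of_lt {u v : ℝ → ℝ} (hu : Continuous u) (hv : Continuous v) {a b : ℝ}
    (hne : ∀ s ∈ uIcc a b, u s ≠ v s) (hab : u a < v a) : u b < v b := by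
  by_contra! hba
  have hzero : (0 : ℝ) ∈ uIcc (u a - v a) (u b - v b) :=
    mem_uIcc.2 (Or.inl ⟨(sub_neg.2 hab).le, sub_nonneg.2 hba⟩)
  obtain ⟨s, hs, hsv⟩ := intermediate_value_uIcc (hu.sub hv).continuousOn hzero
  exact hne s hs (sub_eq_zero.1 hsv)

theorem eq_zero_of_forall_pow_mul_le {κ d C : ℝ} (hκ : 1 < κ) (hd : 0 ≤ d)
    (h : ∀ n : ℕ, κ ^ n * d ≤ C) : d = 0 := by
  by_contra hne
  obtain ⟨n, hn⟩ := pow_unbounded_of_one_lt (C / d) hκ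
  rw [div_lt_iff₀ (hd.lt_of_ne' hne)] at hn
  exact (h n).not_gt hn

theorem exists_one_lt_mul_sub_le_of_hasDerivWithinAt {f g : ℝ → ℝ} {a b : ℝ} (hab : a ≤ b)
    (hg : ContinuousOn g (Icc a b))
    (hf : ∀ x ∈ Icc a b, HasDerivWithinAt f (g x) (Icc a b) x ∧ 1 < g x) :
    ∃ κ, 1 < κ ∧ ∀ x ∈ Icc a b, ∀ y ∈ Icc a b, x ≤ y → κ * (y - x) ≤ f y - f x := by
  obtain ⟨c, hc, hmin⟩ := isCompact_Icc.exists_isMinOn (nonempty_Icc.2 hab) hg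
  have hderiv : ∀ x ∈ interior (Icc a b), HasDerivAt f (g x) x := fun x hx =>
    (hf x (interior_subset hx)).1.hasDerivAt (mem_interior_iff_mem_nhds.1 hx)
  refine ⟨g c, (hf c hc).2, (convex_Icc a b).mul_sub_le_image_sub_of_le_deriv
    (fun x hx => (hf x hx).1.continuousWithinAt)
    (fun x hx => (hderiv x hx).differentiableAt.differentiableWithinAt) fun x hx => ?_⟩
  rw [(hderiv x hx).deriv]
  exact hmin (interior_subset hx)

theorem abs_sub_le_two {x y : ℝ} (hx : x ∈ Icc (-1 : ℝ) 1) (hy : y ∈ Icc (-1 : ℝ) 1) :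
    |x - y| ≤ 2 :=
  abs_sub_le_iff.2 ⟨by linarith [hx.2, hy.1], by linarith [hx.1, hy.2]⟩

def lap (x : ℝ) : Set ℝ := if x ≤ 0 then Icc (-1) 0 else Icc 0 1

theorem lap_of_nonpos {x : ℝ} (hx : x ≤ 0) : lap x = Icc (-1) 0 := if_pos hx

theorem lap_of_pos {x : ℝ} (hx : 0 < x) : lap x = Icc 0 1 := if_neg hx.not_ge

theorem lap_subset (x : ℝ) : lap x ⊆ Icc (-1) 1 := by
  unfold lap
  split_ifs
  · exact Icc_subset_Icc_right zero_le_one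
  · exact Icc_subset_Icc_left (by norm_num)

structure IsExpandingUnimodal (F : ℝ → ℝ) (κ : ℝ) : Prop where
  continuous : Continuous F
  mapsTo : MapsTo F (Icc (-1) 1) (Icc (-1) 1)
  map_neg_one : F (-1) = -1
  map_one : F 1 = -1
  one_lt : 1 < κ
  expand_left : ∀ x ∈ Icc (-1 : ℝ) 0, ∀ y ∈ Icc (-1 : ℝ) 0, x ≤ y → κ * (y - x) ≤ F y - F x
  expand_right : ∀ x ∈ Icc (0 : ℝ) 1, ∀ y ∈ Icc (0 : ℝ) 1, x ≤ y → κ * (y - x) ≤ F x - F y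

theorem exists_isExpandingUnimodal {F : ℝ → ℝ} (hc : Continuous F)
    (hmaps : MapsTo F (Icc (-1) 1) (Icc (-1) 1)) (hneg : F (-1) = -1) (hone : F 1 = -1)
    (hleft : ∃ g : ℝ → ℝ, ContinuousOn g (Icc (-1) 0) ∧
      ∀ x ∈ Icc (-1 : ℝ) 0, HasDerivWithinAt F (g x) (Icc (-1) 0) x ∧ 1 < g x)
    (hright : ∃ g : ℝ → ℝ, ContinuousOn g (Icc 0 1) ∧
      ∀ x ∈ Icc (0 : ℝ) 1, HasDerivWithinAt F (g x) (Icc 0 1) x ∧ g x < -1) :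
    ∃ κ, IsExpandingUnimodal F κ := by
  obtain ⟨gl, hglc, hgl⟩ := hleft
  obtain ⟨gr, hgrc, hgr⟩ := hright
  obtain ⟨κl, hκl, hexpl⟩ :=
    exists_one_lt_mul_sub_le_of_hasDerivWithinAt (by norm_num) hglc hgl
  obtain ⟨κr, hκr, hexpr⟩ := exists_one_lt_mul_sub_le_of_hasDerivWithinAt (f := fun x => -F x)
    (g := fun x => -gr x) zero_le_one hgrc.neg fun x hx =>
      ⟨(hgr x hx).1.neg, by linarith [(hgr x hx).2]⟩
  refine ⟨min κl κr, hc, hmaps, hneg, hone, lt_min hκl hκr, fun x hx y hy hxy => ?_,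
    fun x hx y hy hxy => ?_⟩
  · nlinarith [hexpl x hx y hy hxy, min_le_left κl κr]
  · nlinarith [hexpr x hx y hy hxy, min_le_right κl κr]

namespace IsExpandingUnimodal

variable {F : ℝ → ℝ} {κ : ℝ}

theorem pos (hF : IsExpandingUnimodal F κ) : 0 < κ := zero_lt_one.trans hF.one_lt

theorem strictMonoOn_left (hF : IsExpandingUnimodal F κ) : StrictMonoOn F (Icc (-1) 0) :=
  fun x hx y hy hxy => by nlinarith [hF.expand_left x hx y hy hxy.le, hF.one_lt]

theorem strictAntiOn_right (hF : IsExpandingUnimodal F κ) : StrictAntiOn F (Icc 0 1) :=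
  fun x hx y hy hxy => by nlinarith [hF.expand_right x hx y hy hxy.le, hF.one_lt]

theorem map_le_map_zero (hF : IsExpandingUnimodal F κ) {x : ℝ} (hx : x ∈ Icc (-1 : ℝ) 1) :
    F x ≤ F 0 := by
  rcases le_total x 0 with hx0 | hx0
  · exact hF.strictMonoOn_left.monotoneOn ⟨hx.1, hx0⟩ ⟨by norm_num, le_rfl⟩ hx0
  · exact hF.strictAntiOn_right.antitoneOn ⟨le_rfl, zero_le_one⟩ ⟨hx0, hx.2⟩ hx0

theorem eq_neg_one_of_map_eq_self (hF : IsExpandingUnimodal F κ) {x : ℝ}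
    (hx : x ∈ Icc (-1 : ℝ) 0) (hfix : F x = x) : x = -1 := by
  have := hF.expand_left (-1) ⟨le_rfl, by norm_num⟩ x hx hx.1
  rw [hfix, hF.map_neg_one] at this
  nlinarith [hF.one_lt, hx.1]

theorem surjOn_lap (hF : IsExpandingUnimodal F κ) (x : ℝ) :
    SurjOn F (lap x) (Icc (-1) (F 0)) := by
  unfold lap
  split_ifs
  · have := intermediate_value_Icc (by norm_num : (-1 : ℝ) ≤ 0) hF.continuous.continuousOn
    rwa [hF.map_neg_one] at this
  · have := intermediate_value_Icc' zero_le_one hF.continuous.continuousOn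
    rwa [hF.map_one] at this

theorem injOn_lap (hF : IsExpandingUnimodal F κ) (x : ℝ) : InjOn F (lap x) := by
  unfold lap
  split_ifs
  · exact hF.strictMonoOn_left.injOn
  · exact hF.strictAntiOn_right.injOn

theorem mul_abs_sub_le_of_mem_lap (hF : IsExpandingUnimodal F κ) {x a b : ℝ} (ha : a ∈ lap x)
    (hb : b ∈ lap x) : κ * |a - b| ≤ |F a - F b| := by
  wlog hab : a ≤ b generalizing a b
  · rw [abs_sub_comm a, abs_sub_comm (F a)]
    exact this hb ha (le_of_not_ge hab)
  rw [abs_of_nonpos (sub_nonpos.2 hab), neg_sub]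
  unfold lap at ha hb
  split_ifs at ha hb
  · exact (hF.expand_left a ha b hb hab).trans (abs_sub_comm (F a) _ ▸ le_abs_self _)
  · exact (hF.expand_right a ha b hb hab).trans (le_abs_self _)

end IsExpandingUnimodal

def SameCriticalOrder (F G : ℝ → ℝ) : Prop :=
  ∀ j k : ℕ, F^[j] 0 < F^[k] 0 ↔ G^[j] 0 < G^[k] 0

namespace SameCriticalOrder

variable {F G : ℝ → ℝ}

theorem symm (hFG : SameCriticalOrder F G) : SameCriticalOrder G F := fun j k => (hFG j k).symm

theorem le_iff (hFG : SameCriticalOrder F G) (j k : ℕ) :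
    F^[j] 0 ≤ F^[k] 0 ↔ G^[j] 0 ≤ G^[k] 0 := by
  simpa only [not_lt] using (hFG k j).not

theorem iterate_mem_lap (hFG : SameCriticalOrder F G) (hG : MapsTo G (Icc (-1) 1) (Icc (-1) 1))
    (k : ℕ) : G^[k] 0 ∈ lap (F^[k] 0) := by
  have hGk : G^[k] 0 ∈ Icc (-1 : ℝ) 1 := hG.iterate k ⟨by norm_num, by norm_num⟩
  unfold lap
  split_ifs with hFk
  · exact ⟨hGk.1, (hFG.le_iff k 0).1 hFk⟩
  · exact ⟨((hFG 0 k).1 (not_le.1 hFk)).le, hGk.2⟩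

end SameCriticalOrder

theorem sameCriticalOrder_of_continuous {f : ℝ → ℝ → ℝ}
    (hf : Continuous fun p : ℝ × ℝ => f p.1 p.2) {a b : ℝ}
    (hrel : ∀ s ∈ uIcc a b, ∀ i j : ℕ, i < j →
      ((f s)^[i] 0 = (f s)^[j] 0 ↔ (f a)^[i] 0 = (f a)^[j] 0)) :
    SameCriticalOrder (f a) (f b) := by
  have hrel' : ∀ s ∈ uIcc a b, ∀ j k : ℕ,
      (f s)^[j] 0 = (f s)^[k] 0 ↔ (f a)^[j] 0 = (f a)^[k] 0 := by
    intro s hs j k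
    rcases lt_trichotomy j k with hjk | rfl | hjk
    · exact hrel s hs j k hjk
    · exact iff_of_true rfl rfl
    · rw [eq_comm, hrel s hs k j hjk, eq_comm]
  have hcont := fun n => continuous_iterate_apply hf n 0
  refine fun j k => ⟨fun hlt => ?_, fun hlt => ?_⟩
  · exact lt_of_forall_ne_of_lt (hcont j) (hcont k)
      (fun s hs heq => hlt.ne ((hrel' s hs j k).1 heq)) hlt
  · refine lt_of_forall_ne_of_lt (hcont j) (hcont k) (fun s hs heq => hlt.ne ?_) hlt
    rw [uIcc_comm] at hs
    exact (hrel' b right_mem_uIcc j k).2 ((hrel' s hs j k).1 heq)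

noncomputable def pullback (F G h : ℝ → ℝ) (x : ℝ) : ℝ := invFunOn G (lap x) (h (F x))

structure IsOrbitInterpolant (F G h : ℝ → ℝ) : Prop where
  mapsTo : MapsTo h (Icc (-1) 1) (Icc (-1) 1)
  monotoneOn : MonotoneOn h (Icc (-1) 1)
  map_iterate : ∀ k : ℕ, h (F^[k] 0) = G^[k] 0

section Pullback

variable {F G h h' : ℝ → ℝ} {κF κG : ℝ}

theorem exists_isOrbitInterpolant (hG : MapsTo G (Icc (-1) 1) (Icc (-1) 1))
    (hFG : SameCriticalOrder F G) : ∃ h, IsOrbitInterpolant F G h := by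
  set S : ℝ → Set ℝ := fun x => insert (-1) {y | ∃ k : ℕ, F^[k] 0 ≤ x ∧ G^[k] 0 = y}
  have hS : ∀ x, ∀ y ∈ S x, y ∈ Icc (-1 : ℝ) 1 := by
    rintro x y (rfl | ⟨k, -, rfl⟩)
    · norm_num
    · exact hG.iterate k ⟨by norm_num, by norm_num⟩
  have hbdd : ∀ x, BddAbove (S x) := fun x => ⟨1, fun y hy => (hS x y hy).2⟩
  have hne : ∀ x, (S x).Nonempty := fun x => insert_nonempty _ _
  refine ⟨fun x => sSup (S x), fun x _ => ⟨le_csSup (hbdd x) (mem_insert _ _),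
    csSup_le (hne x) fun y hy => (hS x y hy).2⟩, fun x _ y _ hxy => ?_, fun j => ?_⟩
  · exact csSup_le_csSup (hbdd y) (hne x)
      (insert_subset_insert fun _ ⟨k, hk, hky⟩ => ⟨k, hk.trans hxy, hky⟩)
  · refine le_antisymm (csSup_le (hne _) ?_)
      (le_csSup (hbdd _) (mem_insert_of_mem _ ⟨j, le_rfl, rfl⟩))
    rintro y (rfl | ⟨k, hk, rfl⟩)
    · exact (hG.iterate j ⟨by norm_num, by norm_num⟩).1
    · exact (hFG.le_iff k j).1 hk

namespace IsOrbitInterpolant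

theorem comp_mem_Icc (hF : IsExpandingUnimodal F κF) (hh : IsOrbitInterpolant F G h) {x : ℝ}
    (hx : x ∈ Icc (-1 : ℝ) 1) : h (F x) ∈ Icc (-1) (G 0) := by
  refine ⟨(hh.mapsTo (hF.mapsTo hx)).1, ?_⟩
  rw [← show h (F 0) = G 0 from hh.map_iterate 1]
  exact hh.monotoneOn (hF.mapsTo hx) (hF.mapsTo ⟨by norm_num, zero_le_one⟩)
    (hF.map_le_map_zero hx)

theorem pullback_spec (hF : IsExpandingUnimodal F κF) (hG : IsExpandingUnimodal G κG)
    (hh : IsOrbitInterpolant F G h) {x : ℝ} (hx : x ∈ Icc (-1 : ℝ) 1) :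
    pullback F G h x ∈ lap x ∧ G (pullback F G h x) = h (F x) :=
  invFunOn_pos (hG.surjOn_lap x (hh.comp_mem_Icc hF hx))

theorem monotoneOn_pullback (hF : IsExpandingUnimodal F κF) (hG : IsExpandingUnimodal G κG)
    (hh : IsOrbitInterpolant F G h) : MonotoneOn (pullback F G h) (Icc (-1) 1) := by
  intro x hx y hy hxy
  obtain ⟨hxl, hGx⟩ := hh.pullback_spec hF hG hx
  obtain ⟨hyl, hGy⟩ := hh.pullback_spec hF hG hy
  rcases le_or_gt y 0 with hy0 | hy0
  · rw [lap_of_nonpos (hxy.trans hy0)] at hxl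
    rw [lap_of_nonpos hy0] at hyl
    rw [← hG.strictMonoOn_left.le_iff_le hxl hyl, hGx, hGy]
    exact hh.monotoneOn (hF.mapsTo hx) (hF.mapsTo hy)
      (hF.strictMonoOn_left.monotoneOn ⟨hx.1, hxy.trans hy0⟩ ⟨hy.1, hy0⟩ hxy)
  rw [lap_of_pos hy0] at hyl
  rcases le_or_gt x 0 with hx0 | hx0
  · rw [lap_of_nonpos hx0] at hxl
    exact hxl.2.trans hyl.1
  · rw [lap_of_pos hx0] at hxl
    rw [← hG.strictAntiOn_right.le_iff_ge hyl hxl, hGx, hGy]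
    exact hh.monotoneOn (hF.mapsTo hy) (hF.mapsTo hx)
      (hF.strictAntiOn_right.antitoneOn ⟨hx0.le, hx.2⟩ ⟨hy0.le, hy.2⟩ hxy)

theorem pullback (hF : IsExpandingUnimodal F κF) (hG : IsExpandingUnimodal G κG)
    (hFG : SameCriticalOrder F G) (hh : IsOrbitInterpolant F G h) :
    IsOrbitInterpolant F G (pullback F G h) := by
  refine ⟨fun x hx => lap_subset x (hh.pullback_spec hF hG hx).1,
    hh.monotoneOn_pullback hF hG, fun k => ?_⟩
  rw [Unimodal.pullback, ← iterate_succ_apply' F, hh.map_iterate, iterate_succ_apply']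
  exact (hG.injOn_lap _).leftInvOn_invFunOn (hFG.iterate_mem_lap hG.mapsTo k)

theorem iterate_pullback (hF : IsExpandingUnimodal F κF) (hG : IsExpandingUnimodal G κG)
    (hFG : SameCriticalOrder F G) (hh : IsOrbitInterpolant F G h) (n : ℕ) :
    IsOrbitInterpolant F G ((Unimodal.pullback F G)^[n] h) := by
  induction n with
  | zero => exact hh
  | succ n ih =>
    rw [iterate_succ_apply']
    exact ih.pullback hF hG hFG

theorem mul_abs_pullback_sub_le (hF : IsExpandingUnimodal F κF)
    (hG : IsExpandingUnimodal G κG) (hh : IsOrbitInterpolant F G h)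
    (hh' : IsOrbitInterpolant F G h') {x : ℝ} (hx : x ∈ Icc (-1 : ℝ) 1) :
    κG * |Unimodal.pullback F G h x - Unimodal.pullback F G h' x| ≤ |h (F x) - h' (F x)| := by
  obtain ⟨hl, hG₁⟩ := hh.pullback_spec hF hG hx
  obtain ⟨hl', hG₂⟩ := hh'.pullback_spec hF hG hx
  simpa only [hG₁, hG₂] using hG.mul_abs_sub_le_of_mem_lap hl hl'

theorem pow_mul_abs_iterate_pullback_sub_le (hF : IsExpandingUnimodal F κF)
    (hG : IsExpandingUnimodal G κG) (hFG : SameCriticalOrder F G)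
    (hh : IsOrbitInterpolant F G h) (hh' : IsOrbitInterpolant F G h') (n : ℕ) :
    ∀ x ∈ Icc (-1 : ℝ) 1, κG ^ n *
      |(Unimodal.pullback F G)^[n] h x - (Unimodal.pullback F G)^[n] h' x| ≤ 2 := by
  induction n with
  | zero =>
    intro x hx
    simpa using abs_sub_le_two (hh.mapsTo hx) (hh'.mapsTo hx)
  | succ n ih =>
    intro x hx
    rw [iterate_succ_apply', iterate_succ_apply', pow_succ, mul_assoc]
    refine (mul_le_mul_of_nonneg_left ?_ (pow_pos hG.pos n).le).trans
      (ih (F x) (hF.mapsTo hx))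
    exact mul_abs_pullback_sub_le hF hG (hh.iterate_pullback hF hG hFG n)
      (hh'.iterate_pullback hF hG hFG n) hx

theorem of_tendsto (hF : MapsTo F (Icc (-1) 1) (Icc (-1) 1)) {u : ℕ → ℝ → ℝ} {L : ℝ → ℝ}
    (hu : ∀ n, IsOrbitInterpolant F G (u n))
    (hL : ∀ x ∈ Icc (-1 : ℝ) 1, Tendsto (fun n => u n x) atTop (𝓝 (L x))) :
    IsOrbitInterpolant F G L := by
  refine ⟨fun x hx => isClosed_Icc.mem_of_tendsto (hL x hx) (Eventually.of_forall fun n =>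
    (hu n).mapsTo hx), fun x hx y hy hxy => le_of_tendsto_of_tendsto' (hL x hx) (hL y hy)
    fun n => (hu n).monotoneOn hx hy hxy, fun k => ?_⟩
  have hk := hL _ (hF.iterate k (by norm_num : (0 : ℝ) ∈ Icc (-1 : ℝ) 1))
  simp only [(hu _).map_iterate] at hk
  exact tendsto_nhds_unique hk tendsto_const_nhds

end IsOrbitInterpolant

theorem exists_isOrbitInterpolant_semiconj (hF : IsExpandingUnimodal F κF)
    (hG : IsExpandingUnimodal G κG) (hFG : SameCriticalOrder F G) :
    ∃ h, IsOrbitInterpolant F G h ∧ ∀ x ∈ Icc (-1 : ℝ) 1, h (F x) = G (h x) := by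
  obtain ⟨h₀, hh₀⟩ := exists_isOrbitInterpolant hG.mapsTo hFG
  set u : ℕ → ℝ → ℝ := fun n => (pullback F G)^[n] h₀
  have hu : ∀ n, IsOrbitInterpolant F G (u n) := hh₀.iterate_pullback hF hG hFG
  have hcauchy : ∀ x ∈ Icc (-1 : ℝ) 1, CauchySeq fun n => u n x := by
    intro x hx
    refine cauchySeq_of_le_geometric κG⁻¹ 2 (inv_lt_one_of_one_lt₀ hG.one_lt) fun n => ?_
    have hκ : 0 < κG ^ n := pow_pos hG.pos n
    have := hh₀.pow_mul_abs_iterate_pullback_sub_le hF hG hFG (hh₀.pullback hF hG hFG) n x hx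
    rw [← iterate_succ_apply, ← Real.dist_eq] at this
    rw [inv_pow, ← div_eq_mul_inv, le_div_iff₀ hκ, mul_comm]
    exact this
  choose! L hL using fun x hx => cauchySeq_tendsto_of_complete (hcauchy x hx)
  refine ⟨L, IsOrbitInterpolant.of_tendsto hF.mapsTo hu hL, fun x hx => ?_⟩
  have hstep : ∀ n, G (u (n + 1) x) = u n (F x) := fun n => by
    simp only [u, iterate_succ_apply']
    exact ((hu n).pullback_spec hF hG hx).2
  have hG_lim : Tendsto (fun n => u n (F x)) atTop (𝓝 (G (L x))) :=
    ((hG.continuous.tendsto _).comp ((hL x hx).comp (tendsto_add_atTop_nat 1))).congr hstep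
  exact tendsto_nhds_unique (hL _ (hF.mapsTo hx)) hG_lim

end Pullback

structure IsLapSemiconj (F G h : ℝ → ℝ) : Prop where
  mapsTo_left : MapsTo h (Icc (-1) 0) (Icc (-1) 0)
  mapsTo_right : MapsTo h (Icc 0 1) (Icc 0 1)
  semiconj : ∀ x ∈ Icc (-1 : ℝ) 1, h (F x) = G (h x)

namespace IsLapSemiconj

variable {F G H h h' : ℝ → ℝ} {κ : ℝ}

theorem mem_lap (hh : IsLapSemiconj F G h) {x : ℝ} (hx : x ∈ Icc (-1 : ℝ) 1) :
    h x ∈ lap x := by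
  rcases le_or_gt x 0 with hx0 | hx0
  · rw [lap_of_nonpos hx0]
    exact hh.mapsTo_left ⟨hx.1, hx0⟩
  · rw [lap_of_pos hx0]
    exact hh.mapsTo_right ⟨hx0.le, hx.2⟩

theorem mapsTo (hh : IsLapSemiconj F G h) : MapsTo h (Icc (-1) 1) (Icc (-1) 1) :=
  fun _ hx => lap_subset _ (hh.mem_lap hx)

theorem id : IsLapSemiconj F F id := ⟨mapsTo_id _, mapsTo_id _, fun _ _ => rfl⟩

theorem comp (hh' : IsLapSemiconj G H h') (hh : IsLapSemiconj F G h) :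
    IsLapSemiconj F H (h' ∘ h) :=
  ⟨hh'.mapsTo_left.comp hh.mapsTo_left, hh'.mapsTo_right.comp hh.mapsTo_right, fun x hx => by
    simp only [comp_apply, hh.semiconj x hx, hh'.semiconj _ (hh.mapsTo hx)]⟩

theorem eqOn (hF : MapsTo F (Icc (-1) 1) (Icc (-1) 1)) (hG : IsExpandingUnimodal G κ)
    (hh : IsLapSemiconj F G h) (hh' : IsLapSemiconj F G h') : EqOn h h' (Icc (-1) 1) := by
  have hbound : ∀ n : ℕ, ∀ x ∈ Icc (-1 : ℝ) 1, κ ^ n * |h x - h' x| ≤ 2 := by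
    intro n
    induction n with
    | zero =>
      intro x hx
      simpa using abs_sub_le_two (hh.mapsTo hx) (hh'.mapsTo hx)
    | succ n ih =>
      intro x hx
      calc κ ^ (n + 1) * |h x - h' x| = κ ^ n * (κ * |h x - h' x|) := by ring
        _ ≤ κ ^ n * |h (F x) - h' (F x)| := by
          rw [hh.semiconj x hx, hh'.semiconj x hx]
          exact mul_le_mul_of_nonneg_left
            (hG.mul_abs_sub_le_of_mem_lap (hh.mem_lap hx) (hh'.mem_lap hx)) (pow_pos hG.pos n).le
        _ ≤ 2 := ih _ (hF hx)
  intro x hx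
  exact sub_eq_zero.1 (abs_eq_zero.1
    (eq_zero_of_forall_pow_mul_le hG.one_lt (abs_nonneg _) fun n => hbound n x hx))

theorem map_neg_one (hF : F (-1) = -1) (hG : IsExpandingUnimodal G κ)
    (hh : IsLapSemiconj F G h) : h (-1) = -1 := by
  have hmem : h (-1) ∈ Icc (-1 : ℝ) 0 := hh.mapsTo_left ⟨le_rfl, by norm_num⟩
  refine hG.eq_neg_one_of_map_eq_self hmem ?_
  rw [← hh.semiconj (-1) ⟨le_rfl, by norm_num⟩, hF]

theorem map_one (hF₁ : F (-1) = -1) (hF₂ : F 1 = -1) (hG : IsExpandingUnimodal G κ)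
    (hh : IsLapSemiconj F G h) : h 1 = 1 := by
  refine hG.strictAntiOn_right.injOn (hh.mapsTo_right ⟨zero_le_one, le_rfl⟩)
    ⟨zero_le_one, le_rfl⟩ ?_
  rw [← hh.semiconj 1 ⟨by norm_num, le_rfl⟩, hF₂, hh.map_neg_one hF₁ hG, hG.map_one]

end IsLapSemiconj

theorem IsOrbitInterpolant.isLapSemiconj {F G h : ℝ → ℝ} (hh : IsOrbitInterpolant F G h)
    (hsemiconj : ∀ x ∈ Icc (-1 : ℝ) 1, h (F x) = G (h x)) : IsLapSemiconj F G h := by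
  have h0 : h 0 = 0 := hh.map_iterate 0
  have hzero : (0 : ℝ) ∈ Icc (-1 : ℝ) 1 := ⟨by norm_num, zero_le_one⟩
  refine ⟨fun x hx => ?_, fun x hx => ?_, hsemiconj⟩
  · have hxI : x ∈ Icc (-1 : ℝ) 1 := ⟨hx.1, hx.2.trans zero_le_one⟩
    exact ⟨(hh.mapsTo hxI).1, h0 ▸ hh.monotoneOn hxI hzero hx.2⟩
  · have hxI : x ∈ Icc (-1 : ℝ) 1 := ⟨by linarith [hx.1], hx.2⟩
    exact ⟨h0 ▸ hh.monotoneOn hzero hxI hx.1, (hh.mapsTo hxI).2⟩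

theorem continuousOn_of_monotoneOn_of_surjOn {h : ℝ → ℝ} {a b : ℝ}
    (hmono : MonotoneOn h (Icc a b)) (hmaps : MapsTo h (Icc a b) (Icc a b))
    (hsurj : SurjOn h (Icc a b) (Icc a b)) : ContinuousOn h (Icc a b) := by
  have hmono' : Monotone (hmaps.restrict h _ _) := fun x y hxy => hmono x.2 y.2 hxy
  rw [continuousOn_iff_continuous_domRestrict]
  exact continuous_subtype_val.comp
    (hmono'.continuous_of_surjective (hmaps.restrict_surjective_iff.2 hsurj))

end Unimodal

open Unimodal in
theorem conjugacy_of_constant_critical_relations_general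
    (f : ℝ → ℝ → ℝ) (δ : ℝ)
    (hcont : Continuous fun p : ℝ × ℝ => f p.1 p.2)
    (hunim : ∀ t : ℝ, |t| < δ →
      Set.MapsTo (f t) (Set.Icc (-1 : ℝ) 1) (Set.Icc (-1 : ℝ) 1) ∧
      f t (-1) = -1 ∧ f t 1 = -1 ∧ f t 0 ≤ 1 ∧
      (∃ g : ℝ → ℝ, ContinuousOn g (Set.Icc (-1 : ℝ) 0) ∧
        ∀ x ∈ Set.Icc (-1 : ℝ) 0,
          HasDerivWithinAt (f t) (g x) (Set.Icc (-1 : ℝ) 0) x ∧ 1 < g x) ∧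
      (∃ g : ℝ → ℝ, ContinuousOn g (Set.Icc (0 : ℝ) 1) ∧
        ∀ x ∈ Set.Icc (0 : ℝ) 1,
          HasDerivWithinAt (f t) (g x) (Set.Icc (0 : ℝ) 1) x ∧ g x < -1))
    (hrel : ∀ t : ℝ, |t| < δ → ∀ i j : ℕ, i < j →
      ((f t)^[i] 0 = (f t)^[j] 0 ↔ (f 0)^[i] 0 = (f 0)^[j] 0)) :
    ∀ t : ℝ, |t| < δ → ∃ h : ℝ → ℝ,
      ContinuousOn h (Set.Icc (-1 : ℝ) 1) ∧
      StrictMonoOn h (Set.Icc (-1 : ℝ) 1) ∧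
      h (-1) = -1 ∧ h 1 = 1 ∧
      h '' Set.Icc (-1 : ℝ) 1 = Set.Icc (-1 : ℝ) 1 ∧
      ∀ x ∈ Set.Icc (-1 : ℝ) 1, h (f 0 x) = f t (h x) := by
  intro t ht
  have hexp : ∀ s, |s| < δ → ∃ κ, IsExpandingUnimodal (f s) κ := fun s hs =>
    let ⟨hmaps, hneg, hone, _, hleft, hright⟩ := hunim s hs
    exists_isExpandingUnimodal (hcont.comp (.prodMk_right s)) hmaps hneg hone hleft hright
  obtain ⟨κF, hF⟩ := hexp 0 (by simpa using (abs_nonneg t).trans_lt ht)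
  obtain ⟨κG, hG⟩ := hexp t ht
  have hFG : SameCriticalOrder (f 0) (f t) := sameCriticalOrder_of_continuous hcont
    fun s hs => hrel s (by simpa using (abs_sub_left_of_mem_uIcc hs).trans_lt (by simpa using ht))
  obtain ⟨h, hh, hsc⟩ := exists_isOrbitInterpolant_semiconj hF hG hFG
  obtain ⟨h', hh', hsc'⟩ := exists_isOrbitInterpolant_semiconj hG hF hFG.symm
  have hlap := hh.isLapSemiconj hsc
  have hlap' := hh'.isLapSemiconj hsc'
  have hbij : BijOn h (Icc (-1) 1) (Icc (-1) 1) := InvOn.bijOn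
    ⟨(hlap'.comp hlap).eqOn hF.mapsTo hF IsLapSemiconj.id,
      (hlap.comp hlap').eqOn hG.mapsTo hG IsLapSemiconj.id⟩ hh.mapsTo hh'.mapsTo
  exact ⟨h, continuousOn_of_monotoneOn_of_surjOn hh.monotoneOn hbij.mapsTo hbij.surjOn,
    hh.monotoneOn.strictMonoOn_of_injOn hbij.injOn, hlap.map_neg_one hF.map_neg_one hG,
    hlap.map_one hF.map_neg_one hF.map_one hG, hbij.image_eq, hsc⟩

/-- Theorem 1, A ⟹ B: Let `f t`, `|t| < δ`, be a C¹ family of piecewise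
expanding C¹ unimodal maps (each `f t` maps `I = [-1,1]` to itself, fixes the
boundary conditions, and is C¹ with derivative `> 1` on `[-1,0]` and `< -1` on
`[0,1]`; the family is continuous jointly and differentiable in `t`).  If the set of
critical relations `R_t = {(i,j) : f_t^i(c) = f_t^j(c), i < j}` is constant in `t`,
then each `f t` is conjugate to `f 0` by an orientation-preserving homeomorphism
`h : I → I`. -/
theorem conjugacy_of_constant_critical_relations
    (f : ℝ → ℝ → ℝ) (δ : ℝ) (hδ : 0 < δ)
    (hcont : Continuous fun p : ℝ × ℝ => f p.1 p.2)
    (hC1t : ∀ x ∈ Set.Icc (-1 : ℝ) 1, ∀ t : ℝ, |t| < δ →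
      ∃ w : ℝ, HasDerivAt (fun s => f s x) w t)
    (hunim : ∀ t : ℝ, |t| < δ →
      Set.MapsTo (f t) (Set.Icc (-1 : ℝ) 1) (Set.Icc (-1 : ℝ) 1) ∧
      f t (-1) = -1 ∧ f t 1 = -1 ∧ f t 0 ≤ 1 ∧
      (∃ g : ℝ → ℝ, ContinuousOn g (Set.Icc (-1 : ℝ) 0) ∧
        ∀ x ∈ Set.Icc (-1 : ℝ) 0,
          HasDerivWithinAt (f t) (g x) (Set.Icc (-1 : ℝ) 0) x ∧ 1 < g x) ∧
      (∃ g : ℝ → ℝ, ContinuousOn g (Set.Icc (0 : ℝ) 1) ∧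
        ∀ x ∈ Set.Icc (0 : ℝ) 1,
          HasDerivWithinAt (f t) (g x) (Set.Icc (0 : ℝ) 1) x ∧ g x < -1))
    (hrel : ∀ t : ℝ, |t| < δ → ∀ i j : ℕ, i < j →
      ((f t)^[i] 0 = (f t)^[j] 0 ↔ (f 0)^[i] 0 = (f 0)^[j] 0)) :
    ∀ t : ℝ, |t| < δ → ∃ h : ℝ → ℝ,
      ContinuousOn h (Set.Icc (-1 : ℝ) 1) ∧
      StrictMonoOn h (Set.Icc (-1 : ℝ) 1) ∧
      h (-1) = -1 ∧ h 1 = 1 ∧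
      h '' Set.Icc (-1 : ℝ) 1 = Set.Icc (-1 : ℝ) 1 ∧
      ∀ x ∈ Set.Icc (-1 : ℝ) 1, h (f 0 x) = f t (h x) :=
  conjugacy_of_constant_critical_relations_general f δ hcont hunim hrel
end

section
/- Let f be a piecewise expanding unimodal map with λ_f = min|Df| > 1, let ε > 0 and suppose there exists N₀ such that for every interval Q ⊆ [-ε,ε], |f^{N₀}(Q)| > λ_f|Q|. If Q ⊆ I is an interval with |f^i(Q)| < ε for every i ∈ ℕ, then |Q| = 0. -/
/-!
While an interval `Q` avoids the turning point `0`, one application of `f` stretches it by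
`lam`; once it straddles `0` while shorter than `ε`, it lies in `[-ε, ε]` and `N₀` applications
stretch it by `lam`. So some iterate of `Q` is `lam ^ s` times longer than `Q` for every `s`,
which is incompatible with all iterates being shorter than `ε` unless `|Q| = 0`.
-/

open Set Metric

theorem nonpos_of_forall_exists_mul_le {ι : Type*} {d : ι → ℝ} {lam C : ℝ} (hlam : 1 < lam)
    (hC : ∀ i, d i ≤ C) (hgrow : ∀ i, ∃ j, lam * d i ≤ d j) (i : ι) : d i ≤ 0 := by
  by_contra! hpos
  have hpow : ∀ s : ℕ, ∃ j, lam ^ s * d i ≤ d j := by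
    intro s
    induction s with
    | zero => exact ⟨i, by simp⟩
    | succ s ih =>
      obtain ⟨j, hj⟩ := ih
      obtain ⟨k, hk⟩ := hgrow j
      refine ⟨k, ?_⟩
      calc lam ^ (s + 1) * d i = lam * (lam ^ s * d i) := by ring
        _ ≤ lam * d j := by gcongr
        _ ≤ d k := hk
  obtain ⟨s, hs⟩ := pow_unbounded_of_one_lt (C / d i) hlam
  obtain ⟨j, hj⟩ := hpow s
  have := (div_lt_iff₀ hpos).1 hs
  linarith [hC j]

theorem ContinuousOn.exists_image_Icc_eq {f : ℝ → ℝ} {a b : ℝ} (hab : a ≤ b)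
    (hf : ContinuousOn f (Icc a b)) : ∃ u v, u ≤ v ∧ f '' Icc a b = Icc u v := by
  have himg := hf.image_Icc hab
  have hne : (Icc (sInf (f '' Icc a b)) (sSup (f '' Icc a b))).Nonempty :=
    himg ▸ (nonempty_Icc.2 hab).image f
  exact ⟨_, _, nonempty_Icc.1 hne, himg⟩

theorem exists_iterate_mul_le_diam_image {f : ℝ → ℝ} {lam ε : ℝ} {N₀ : ℕ}
    (hexp : ∀ a b : ℝ, -1 ≤ a → a ≤ b → b ≤ 1 → (0 : ℝ) ∉ Ioo a b →
      lam * (b - a) ≤ diam (f '' Icc a b))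
    (hN : ∀ a b : ℝ, -ε ≤ a → a < b → b ≤ ε →
      lam * (b - a) < diam (f^[N₀] '' Icc a b))
    {u v : ℝ} (hu : -1 ≤ u) (huv : u ≤ v) (hv : v ≤ 1) (hshort : v - u < ε) :
    ∃ n, lam * (v - u) ≤ diam (f^[n] '' Icc u v) := by
  by_cases h0 : (0 : ℝ) ∈ Ioo u v
  · exact ⟨N₀, (hN u v (by linarith [h0.2]) (h0.1.trans h0.2) (by linarith [h0.1])).le⟩
  · exact ⟨1, hexp u v hu huv hv h0⟩

theorem small_iterates_implies_degenerate_general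
    (f : ℝ → ℝ) (lam ε : ℝ) (N₀ : ℕ)
    (hlam : 1 < lam)
    (hcont : ContinuousOn f (Set.Icc (-1 : ℝ) 1))
    (hmap : Set.MapsTo f (Set.Icc (-1 : ℝ) 1) (Set.Icc (-1 : ℝ) 1))
    (hexp : ∀ a b : ℝ, -1 ≤ a → a ≤ b → b ≤ 1 → (0 : ℝ) ∉ Set.Ioo a b →
      lam * (b - a) ≤ Metric.diam (f '' Set.Icc a b))
    (hN : ∀ a b : ℝ, -ε ≤ a → a < b → b ≤ ε →
      lam * (b - a) < Metric.diam (f^[N₀] '' Set.Icc a b)) :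
    ∀ a b : ℝ, -1 ≤ a → a ≤ b → b ≤ 1 →
      (∀ i : ℕ, Metric.diam (f^[i] '' Set.Icc a b) < ε) → a = b := by
  intro a b ha hab hb hsmall
  have hQ : Icc a b ⊆ Icc (-1) 1 := Icc_subset_Icc ha hb
  have hgrow : ∀ m, ∃ m', lam * diam (f^[m] '' Icc a b) ≤ diam (f^[m'] '' Icc a b) := by
    intro m
    obtain ⟨u, v, huv, himg⟩ := ((hcont.iterate hmap m).mono hQ).exists_image_Icc_eq hab
    have huvI : Icc u v ⊆ Icc (-1) 1 := himg ▸ ((hmap.iterate m).mono_left hQ).image_subset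
    have hshort := hsmall m
    rw [himg, Real.diam_Icc huv] at hshort
    obtain ⟨n, hn⟩ := exists_iterate_mul_le_diam_image hexp hN
      (huvI (left_mem_Icc.2 huv)).1 huv (huvI (right_mem_Icc.2 huv)).2 hshort
    refine ⟨n + m, ?_⟩
    rwa [Function.iterate_add, image_comp, himg, Real.diam_Icc huv]
  have hdegen := nonpos_of_forall_exists_mul_le hlam (fun m => (hsmall m).le) hgrow 0
  rw [Function.iterate_zero, image_id, Real.diam_Icc hab] at hdegen
  linarith

/-- core of Proposition 2.1: Let `f` be a piecewise expanding unimodal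
map on `I = [-1,1]` (so that any interval avoiding the critical point `0` is expanded
by a factor `lam > 1`), let `ε > 0`, and suppose `N₀` is such that every nondegenerate
interval `Q ⊆ [-ε,ε]` satisfies `|f^{N₀}(Q)| > lam·|Q|`.  If `Q = [a,b] ⊆ I` is an
interval with `|f^i(Q)| < ε` for all `i`, then `|Q| = 0`, i.e. `a = b`.
Lengths of images are expressed as metric diameters of images of the compact
interval (these images are intervals, by continuity). -/
theorem small_iterates_implies_degenerate
    (f : ℝ → ℝ) (lam ε : ℝ) (N₀ : ℕ)
    (hlam : 1 < lam) (hε : 0 < ε) (hε1 : ε ≤ 1)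
    (hcont : ContinuousOn f (Set.Icc (-1 : ℝ) 1))
    (hmap : Set.MapsTo f (Set.Icc (-1 : ℝ) 1) (Set.Icc (-1 : ℝ) 1))
    (hexp : ∀ a b : ℝ, -1 ≤ a → a ≤ b → b ≤ 1 → (0 : ℝ) ∉ Set.Ioo a b →
      lam * (b - a) ≤ Metric.diam (f '' Set.Icc a b))
    (hN : ∀ a b : ℝ, -ε ≤ a → a < b → b ≤ ε →
      lam * (b - a) < Metric.diam (f^[N₀] '' Set.Icc a b)) :
    ∀ a b : ℝ, -1 ≤ a → a ≤ b → b ≤ 1 →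
      (∀ i : ℕ, Metric.diam (f^[i] '' Set.Icc a b) < ε) → a = b :=
  small_iterates_implies_degenerate_general f lam ε N₀ hlam hcont hmap hexp hN
end
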